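/- arXiv:1109.6708 — 6 statements merged into one kernel-verified Lean document; each statement's English description precedes it below -/
import Mathlib

section
/- Let k ∈ ℂ with Re k > 0 and Im k > 0, and let λ ∈ ℝ satisfy λ² ≥ 2|k|². Then the principal square root γ(λ) = (λ² − k²)^{1/2} satisfies Re γ(λ) ≥ |λ|/2. -/
/-- For `k ∈ ℂ` with `Re k > 0`, `Im k > 0`, and `λ ∈ ℝ` with `λ² ≥ 2|k|²`,
the principal square root `γ(λ) = (λ² − k²)^{1/2}` satisfies `Re γ(λ) ≥ |λ|/2`. -/
theorem gamma_lower_bound (k : ℂ) (hk_re : 0 < k.re) (hk_im : 0 < k.im)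
    (l : ℝ) (hl : 2 * ‖k‖ ^ 2 ≤ l ^ 2) :
    |l| / 2 ≤ (((l : ℂ) ^ 2 - k ^ 2) ^ ((1 : ℂ) / 2)).re := by
  have h1 : (1 : ℂ)/2 = (2⁻¹ : ℂ) := by norm_num
  rw [h1, Complex.cpow_inv_two_re]
  set z : ℂ := (l : ℂ) ^ 2 - k ^ 2 with hz
  have hzre : z.re = l ^ 2 - (k.re ^ 2 - k.im ^ 2) := by
    simp [hz, pow_two, Complex.mul_re]
  have hk2 : ‖k‖ ^ 2 = k.re ^ 2 + k.im ^ 2 := by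
    rw [Complex.sq_norm, Complex.normSq_apply]; ring
  have hre2 : l ^ 2 / 2 ≤ z.re := by
    rw [hzre]; nlinarith [sq_nonneg k.im]
  have habs : z.re ≤ ‖z‖ := Complex.re_le_norm z
  rw [show |l| / 2 = Real.sqrt ((|l| / 2) ^ 2) from
    (Real.sqrt_sq (by positivity)).symm]
  apply Real.sqrt_le_sqrt
  have : |l| ^ 2 = l ^ 2 := sq_abs l
  nlinarith
end

section
/- Let k ∈ ℂ with Re k > 0 and Im k > 0, and fix x₀, y₀ ∈ ℝ. For y ≠ y₀, the function λ ↦ e^{−γ(λ)|y−y₀|}·e^{iλ(x−x₀)}/γ(λ) is Lebesgue integrable on ℝ. -/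
open MeasureTheory

section Aux
open Real Set

lemma my_integrable_exp_neg_mul_abs {b : ℝ} (hb : 0 < b) :
    Integrable fun x : ℝ => Real.exp (-b * |x|) := by
  have hIoi : IntegrableOn (fun x : ℝ => Real.exp (-b * |x|)) (Ioi 0) := by
    apply (exp_neg_integrableOn_Ioi 0 hb).congr_fun ?_ measurableSet_Ioi
    intro x hx
    simp [abs_of_pos (mem_Ioi.mp hx)]
  rw [← integrableOn_univ, ← @Iio_union_Ici _ _ (0 : ℝ), integrableOn_union,
    integrableOn_Ici_iff_integrableOn_Ioi]
  refine ⟨?_, hIoi⟩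
  rw [← (Measure.measurePreserving_neg (volume : Measure ℝ)).integrableOn_comp_preimage
      (Homeomorph.neg ℝ).measurableEmbedding]
  simpa only [Function.comp_def, abs_neg, neg_preimage, neg_Iio, neg_zero] using hIoi

lemma re_cpow_half_nonneg {z : ℂ} (hz : z ≠ 0) : 0 ≤ (z ^ ((1:ℂ)/2)).re := by
  rw [Complex.cpow_def_of_ne_zero hz, Complex.exp_re]
  have h1 : (Complex.log z * (1/2)).im = z.arg / 2 := by
    simp [Complex.mul_im, Complex.log_im]
    ring
  rw [h1]
  refine mul_nonneg (Real.exp_pos _).le (Real.cos_nonneg_of_mem_Icc ⟨?_, ?_⟩)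
  · nlinarith [Complex.neg_pi_lt_arg z, Real.pi_pos]
  · nlinarith [Complex.arg_le_pi z]

lemma sq_re_cpow_half {z : ℂ} (hz : z ≠ 0) :
    ((z ^ ((1:ℂ)/2)).re)^2 = (‖z‖ + z.re)/2 := by
  rw [Complex.cpow_def_of_ne_zero hz, Complex.exp_re]
  have h1 : (Complex.log z * (1/2)).im = z.arg / 2 := by
    simp [Complex.mul_im, Complex.log_im]; ring
  have h2 : (Complex.log z * (1/2)).re = Real.log ‖z‖ / 2 := by
    simp [Complex.mul_re, Complex.log_re]; ring
  rw [h1, h2, mul_pow, ← Real.exp_nat_mul]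
  have habs : (0:ℝ) < ‖z‖ := norm_pos_iff.mpr hz
  have : Real.cos (z.arg / 2) ^ 2 = (1 + Real.cos z.arg) / 2 := by
    have := Real.cos_sq (z.arg / 2)
    rw [show 2 * (z.arg / 2) = z.arg by ring] at this
    linarith
  rw [this, Complex.cos_arg hz]
  rw [show ((2:ℕ):ℝ) * (Real.log ‖z‖ / 2) = Real.log ‖z‖ by push_cast; ring,
    Real.exp_log habs]
  field_simp

lemma abs_cpow_half {z : ℂ} (hz : z ≠ 0) :
    ‖z ^ ((1:ℂ)/2)‖ = ‖z‖ ^ ((1:ℝ)/2) := by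
  rw [Complex.norm_cpow_of_ne_zero hz]
  simp

end Aux

open Real Set in
/-- For `k ∈ ℂ` with `Re k > 0` and `Im k > 0`, and fixed `x₀, y₀ ∈ ℝ`:
for `y ≠ y₀`, the Sommerfeld integrand
`λ ↦ e^{−γ(λ)|y−y₀|}·e^{iλ(x−x₀)}/γ(λ)` is Lebesgue integrable on `ℝ`,
where `γ(λ) = (λ² − k²)^{1/2}` is the principal square root. -/
theorem sommerfeld_integrand_integrable (k : ℂ) (hk_re : 0 < k.re) (hk_im : 0 < k.im)
    (x₀ y₀ : ℝ)
    (γ : ℝ → ℂ) (hγ : ∀ l : ℝ, γ l = ((l : ℂ) ^ 2 - k ^ 2) ^ ((1 : ℂ) / 2))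
    (x y : ℝ) (hy : y ≠ y₀) :
    Integrable (fun l : ℝ =>
      Complex.exp (-γ l * |y - y₀|) * Complex.exp (Complex.I * l * (x - x₀)) / γ l) := by
  simp only [hγ]
  have hc : 0 < |y - y₀| := abs_sub_pos.mpr hy
  set c : ℝ := |y - y₀| with hc_def
  set g : ℝ → ℂ := fun l => ((l : ℂ) ^ 2 - k ^ 2) ^ ((1 : ℂ) / 2) with hg_def
  have him : ∀ l : ℝ, ((l : ℂ) ^ 2 - k ^ 2).im = -(2 * k.re * k.im) := by
    intro l
    simp [pow_two, Complex.mul_im]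
    ring
  have hzne : ∀ l : ℝ, ((l : ℂ) ^ 2 - k ^ 2) ≠ 0 := by
    intro l h
    have h2 := him l
    rw [h] at h2
    simp only [Complex.zero_im] at h2
    nlinarith
  have habs : ∀ l : ℝ, ‖g l‖ = ‖(l : ℂ) ^ 2 - k ^ 2‖ ^ ((1:ℝ)/2) :=
    fun l => abs_cpow_half (hzne l)
  set m : ℝ := Real.sqrt (2 * k.re * k.im) with hm_def
  have hm : 0 < m := Real.sqrt_pos.mpr (by positivity)
  have hlb : ∀ l : ℝ, m ≤ ‖g l‖ := by
    intro l
    rw [habs l, hm_def, Real.sqrt_eq_rpow]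
    apply Real.rpow_le_rpow (by positivity) _ (by norm_num)
    have := Complex.abs_im_le_norm ((l : ℂ) ^ 2 - k ^ 2)
    rw [him l] at this
    rw [abs_of_nonpos (by nlinarith)] at this
    linarith
  have hgne : ∀ l : ℝ, g l ≠ 0 := by
    intro l h
    have := hlb l
    rw [h] at this
    simp at this
    nlinarith
  have hre0 : ∀ l : ℝ, 0 ≤ (g l).re := fun l => re_cpow_half_nonneg (hzne l)
  set R : ℝ := Real.sqrt (2 * |(k ^ 2).re|) with hR_def
  have hR0 : 0 ≤ R := Real.sqrt_nonneg _
  have hre_big : ∀ l : ℝ, R ≤ |l| → |l| / 2 ≤ (g l).re := by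
    intro l hl
    have hsq : ((g l).re) ^ 2 = (‖(l : ℂ) ^ 2 - k ^ 2‖ + ((l : ℂ) ^ 2 - k ^ 2).re) / 2 :=
      sq_re_cpow_half (hzne l)
    have hrez : ((l : ℂ) ^ 2 - k ^ 2).re = l ^ 2 - (k ^ 2).re := by
      simp [pow_two, Complex.mul_re]
    have h1 : ((l : ℂ) ^ 2 - k ^ 2).re ≤ ‖(l : ℂ) ^ 2 - k ^ 2‖ :=
      Complex.re_le_norm _
    have h2 : 2 * |(k ^ 2).re| ≤ l ^ 2 := by
      have := Real.sq_sqrt (by positivity : (0:ℝ) ≤ 2 * |(k ^ 2).re|)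
      nlinarith [sq_abs l, abs_nonneg l]
    have h3 : (k ^ 2).re ≤ |(k ^ 2).re| := le_abs_self _
    have h4 : (|l| / 2) ^ 2 ≤ ((g l).re) ^ 2 := by
      rw [hsq]
      nlinarith [sq_abs l]
    nlinarith [hre0 l, abs_nonneg l]
  have hnorm : ∀ l : ℝ,
      ‖Complex.exp (-g l * c) * Complex.exp (Complex.I * l * (x - x₀)) / g l‖
        = Real.exp (-(c * (g l).re)) / ‖g l‖ := by
    intro l
    rw [norm_div, norm_mul, Complex.norm_exp, Complex.norm_exp]
    have e1 : (-g l * (c : ℂ)).re = -(c * (g l).re) := by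
      simp [Complex.mul_re]
      ring
    have e2 : (Complex.I * (l:ℝ) * ((x:ℂ) - (x₀:ℂ))).re = 0 := by
      simp [Complex.mul_re, Complex.mul_im]
    rw [e1, e2]
    simp
  have key : ∀ l : ℝ,
      ‖Complex.exp (-g l * c) * Complex.exp (Complex.I * l * (x - x₀)) / g l‖
        ≤ (Real.exp (c * R / 2) / m) * Real.exp (-(c / 2) * |l|) := by
    intro l
    rw [hnorm l]
    have hexp : -(c * (g l).re) ≤ c * R / 2 + -((c / 2) * |l|) := by
      rcases le_or_gt R |l| with h | h
      · have := hre_big l h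
        nlinarith
      · have := hre0 l
        nlinarith
    calc Real.exp (-(c * (g l).re)) / ‖g l‖
        ≤ Real.exp (c * R / 2 + -((c / 2) * |l|)) / m := by
          apply div_le_div₀ (Real.exp_pos _).le (Real.exp_le_exp.mpr hexp) hm (hlb l)
      _ = (Real.exp (c * R / 2) / m) * Real.exp (-(c / 2) * |l|) := by
          rw [Real.exp_add]; ring
  have hcont : Continuous g := by
    rw [continuous_iff_continuousAt]
    intro l
    have h1 : ContinuousAt (fun z : ℂ => z ^ ((1:ℂ)/2)) ((l : ℂ) ^ 2 - k ^ 2) := by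
      apply continuousAt_cpow_const
      rw [Complex.mem_slitPlane_iff]
      right
      rw [him l]
      nlinarith
    have h2 : ContinuousAt (fun l : ℝ => (l : ℂ) ^ 2 - k ^ 2) l := by fun_prop
    exact ContinuousAt.comp (f := fun l : ℝ => (l : ℂ) ^ 2 - k ^ 2) h1 h2
  have hfc : Continuous (fun l : ℝ =>
      Complex.exp (-g l * c) * Complex.exp (Complex.I * l * (x - x₀)) / g l) := by
    apply Continuous.div _ hcont hgne
    apply Continuous.mul
    · exact Complex.continuous_exp.comp (by fun_prop)
    · exact Complex.continuous_exp.comp (by fun_prop)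
  exact Integrable.mono'
    ((my_integrable_exp_neg_mul_abs (half_pos hc)).const_mul (Real.exp (c * R / 2) / m))
    hfc.aestronglyMeasurable (ae_of_all _ key)
end

section
/- Let k ∈ ℂ with Re k > 0 and Im k > 0, and fix x₀, y₀ ∈ ℝ. Define G(x, y) = (1/4π)·∫_ℝ e^{−γ(λ)|y−y₀|}·e^{iλ(x−x₀)}/γ(λ) dλ for (x, y) ∈ ℝ² with y ≠ y₀. Then at every point (x, y) with y ≠ y₀, G possesses second partial derivatives in x and in y and satisfies the homogeneous Helmholtz equation ∂²G/∂x² + ∂²G/∂y² + k²·G = 0. -/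
open MeasureTheory

noncomputable def Complex.abs : AbsoluteValue ℂ ℝ := NormedField.toAbsoluteValue ℂ

@[simp] lemma Complex.abs_apply_norm (z : ℂ) : Complex.abs z = ‖z‖ := rfl

lemma Complex.norm_eq_abs (z : ℂ) : ‖z‖ = Complex.abs z := rfl

lemma Complex.abs_exp (z : ℂ) : Complex.abs (Complex.exp z) = Real.exp z.re :=
  Complex.norm_exp z

lemma Complex.abs_ofReal (r : ℝ) : Complex.abs (r : ℂ) = |r| := Complex.norm_real r

lemma Complex.abs_im_le_abs (z : ℂ) : |z.im| ≤ Complex.abs z := Complex.abs_im_le_norm z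

section Aux

open Real Set Complex Metric

lemma smz_integrable_exp_neg_abs {d : ℝ} (hd : 0 < d) :
    Integrable (fun l : ℝ => Real.exp (-d * |l|)) := by
  have h1 : IntegrableOn (fun l : ℝ => Real.exp (-d * |l|)) (Ici 0) := by
    rw [integrableOn_Ici_iff_integrableOn_Ioi]
    refine (exp_neg_integrableOn_Ioi 0 hd).congr_fun ?_ measurableSet_Ioi
    intro x hx; simp [abs_of_pos (show (0:ℝ) < x from hx)]
  have h2 : IntegrableOn (fun l : ℝ => Real.exp (-d * |l|)) (Iic 0) := by
    have hmap : (volume : Measure ℝ).restrict (Iic 0) =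
        Measure.map Neg.neg ((volume : Measure ℝ).restrict (Ici 0)) := by
      rw [show (Ici (0:ℝ)) = Neg.neg ⁻¹' (Iic 0) by ext z; simp,
        ← Measure.restrict_map measurable_neg measurableSet_Iic, Measure.map_neg_eq_self]
    rw [IntegrableOn, hmap,
      integrable_map_measure (Continuous.aestronglyMeasurable (by continuity))
        measurable_neg.aemeasurable]
    refine h1.congr_fun ?_ measurableSet_Ici
    intro x hx; simp [Function.comp]
  rw [← integrableOn_univ, ← Set.Iic_union_Ici (a := (0:ℝ))]
  exact h2.union h1

lemma smz_integrable_of_exp_decay {f : ℝ → ℝ} (hf : Continuous f) {d C R : ℝ} (hd : 0 < d)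
    (h : ∀ l : ℝ, R ≤ |l| → |f l| ≤ C * Real.exp (-d * |l|)) : Integrable f := by
  have hg : Continuous (fun l : ℝ => |f l| * Real.exp (d * |l|)) :=
    hf.abs.mul (Real.continuous_exp.comp ((continuous_const (y := d)).mul continuous_abs))
  obtain ⟨M, hM⟩ := (isCompact_Icc (a := -R) (b := R)).exists_bound_of_continuousOn hg.continuousOn
  refine ((smz_integrable_exp_neg_abs hd).const_mul (max C M)).mono' hf.aestronglyMeasurable
    (ae_of_all _ fun l => ?_)
  rw [Real.norm_eq_abs]
  rcases le_or_gt R |l| with hR | hR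
  · exact (h l hR).trans (mul_le_mul_of_nonneg_right (le_max_left _ _) (Real.exp_nonneg _))
  · have h1 := hM l (abs_le.mp hR.le)
    rw [Real.norm_eq_abs, _root_.abs_of_nonneg (by positivity)] at h1
    have h2 : |f l| ≤ M * Real.exp (-d * |l|) := by
      have hep : (0:ℝ) < Real.exp (d * |l|) := Real.exp_pos _
      rw [show (-d * |l|) = -(d * |l|) by ring, Real.exp_neg]
      rw [← le_div_iff₀ hep] at h1
      calc |f l| ≤ M / Real.exp (d * |l|) := h1
        _ = M * (Real.exp (d * |l|))⁻¹ := div_eq_mul_inv _ _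
    exact h2.trans (mul_le_mul_of_nonneg_right (le_max_right _ _) (Real.exp_nonneg _))

variable {k : ℂ}

lemma smz_z_ne (hk_re : 0 < k.re) (hk_im : 0 < k.im) (l : ℝ) : ((l:ℂ)^2 - k^2) ≠ 0 := by
  intro h
  have h2 : ((l:ℂ)^2 - k^2).im < 0 := by
    simp only [Complex.sub_im, pow_two, Complex.mul_im, Complex.ofReal_re, Complex.ofReal_im]
    nlinarith
  rw [h] at h2; simp at h2

lemma smz_γ_ne (hk_re : 0 < k.re) (hk_im : 0 < k.im) (l : ℝ) :
    ((l:ℂ)^2 - k^2) ^ ((1:ℂ)/2) ≠ 0 := by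
  simp [Complex.cpow_eq_zero_iff, smz_z_ne hk_re hk_im l]

lemma smz_γ_sq (hk_re : 0 < k.re) (hk_im : 0 < k.im) (l : ℝ) :
    (((l:ℂ)^2 - k^2) ^ ((1:ℂ)/2)) ^ 2 = (l:ℂ)^2 - k^2 := by
  rw [pow_two, ← Complex.cpow_add _ _ (smz_z_ne hk_re hk_im l)]
  norm_num

lemma smz_γ_re_nonneg (hk_re : 0 < k.re) (hk_im : 0 < k.im) (l : ℝ) :
    0 ≤ ((((l:ℂ)^2 - k^2) ^ ((1:ℂ)/2)).re) := by
  rw [Complex.cpow_def_of_ne_zero (smz_z_ne hk_re hk_im l), Complex.exp_re]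
  apply mul_nonneg (Real.exp_nonneg _)
  have harg := Complex.abs_arg_le_pi ((l:ℂ)^2 - k^2)
  have him : (Complex.log ((l:ℂ)^2 - k^2) * ((1:ℂ)/2)).im
      = ((l:ℂ)^2 - k^2).arg / 2 := by
    simp [Complex.mul_im, Complex.log_im, Complex.log_re]
    ring
  rw [him]
  apply Real.cos_nonneg_of_mem_Icc
  constructor <;> [linarith [abs_le.mp harg |>.1]; linarith [abs_le.mp harg |>.2]]

lemma smz_γ_norm_lower (hk_re : 0 < k.re) (hk_im : 0 < k.im) (l : ℝ) :
    Real.sqrt (2 * k.re * k.im) ≤ Complex.abs (((l:ℂ)^2 - k^2) ^ ((1:ℂ)/2)) := by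
  have h1 : Complex.abs (((l:ℂ)^2 - k^2) ^ ((1:ℂ)/2)) ^ 2 = Complex.abs ((l:ℂ)^2 - k^2) := by
    rw [← map_pow, smz_γ_sq hk_re hk_im]
  have h2 : 2 * k.re * k.im ≤ Complex.abs ((l:ℂ)^2 - k^2) := by
    have hle := Complex.abs_im_le_abs ((l:ℂ)^2 - k^2)
    have him : |((l:ℂ)^2 - k^2).im| = 2 * k.re * k.im := by
      simp only [Complex.sub_im, pow_two, Complex.mul_im, Complex.ofReal_re, Complex.ofReal_im]
      rw [abs_of_nonpos (by nlinarith)]; ring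
    linarith [him ▸ hle]
  rw [show Complex.abs (((l:ℂ)^2 - k^2) ^ ((1:ℂ)/2))
      = Real.sqrt (Complex.abs (((l:ℂ)^2 - k^2) ^ ((1:ℂ)/2)) ^ 2) by
    rw [Real.sqrt_sq (AbsoluteValue.nonneg _ _)], h1]
  exact Real.sqrt_le_sqrt h2

lemma smz_γ_norm_upper (hk_re : 0 < k.re) (hk_im : 0 < k.im) (l : ℝ) :
    Complex.abs (((l:ℂ)^2 - k^2) ^ ((1:ℂ)/2)) ≤ |l| + Complex.abs k := by
  have h1 : Complex.abs (((l:ℂ)^2 - k^2) ^ ((1:ℂ)/2)) ^ 2 = Complex.abs ((l:ℂ)^2 - k^2) := by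
    rw [← map_pow, smz_γ_sq hk_re hk_im]
  have h2 : Complex.abs ((l:ℂ)^2 - k^2) ≤ (|l| + Complex.abs k)^2 := by
    calc Complex.abs ((l:ℂ)^2 - k^2) ≤ Complex.abs ((l:ℂ)^2) + Complex.abs (k^2) :=
          (Complex.abs.sub_le_add _ _)
      _ = |l|^2 + Complex.abs k ^ 2 := by rw [map_pow, map_pow, Complex.abs_ofReal]
      _ ≤ (|l| + Complex.abs k)^2 := by
          nlinarith [abs_nonneg l, AbsoluteValue.nonneg Complex.abs k]
  nlinarith [AbsoluteValue.nonneg Complex.abs (((l:ℂ)^2 - k^2) ^ ((1:ℂ)/2)),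
    abs_nonneg l, AbsoluteValue.nonneg Complex.abs k]

lemma smz_γ_re_big (hk_re : 0 < k.re) (hk_im : 0 < k.im) (l : ℝ)
    (hl : 2 * Real.sqrt (max ((k^2).re) 0) + 1 ≤ |l|) :
    3/4 * |l| ≤ ((((l:ℂ)^2 - k^2) ^ ((1:ℂ)/2)).re) := by
  set γ := (((l:ℂ)^2 - k^2) ^ ((1:ℂ)/2))
  have hsq : γ ^ 2 = (l:ℂ)^2 - k^2 := smz_γ_sq hk_re hk_im l
  have hre2 : γ.re^2 - γ.im^2 = l^2 - (k^2).re := by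
    have := congrArg Complex.re hsq
    simpa [pow_two, Complex.mul_re, Complex.sub_re, Complex.ofReal_re, Complex.ofReal_im]
      using this
  have hA : max ((k^2).re) 0 ≤ l^2/4 := by
    have h0 : (2 * Real.sqrt (max ((k^2).re) 0) + 1)^2 ≤ l^2 := by
      rw [← _root_.sq_abs l]; nlinarith [Real.sqrt_nonneg (max ((k^2).re) 0)]
    nlinarith [Real.sq_sqrt (le_max_right ((k^2).re) 0), Real.sqrt_nonneg (max ((k^2).re) 0)]
  have h3 : (3/4 * |l|)^2 ≤ γ.re^2 := by
    have : (k^2).re ≤ l^2/4 := le_trans (le_max_left _ _) hA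
    nlinarith [_root_.sq_abs l, sq_nonneg γ.im]
  have := smz_γ_re_nonneg hk_re hk_im l
  nlinarith [abs_nonneg l]

lemma smz_γ_cont (hk_re : 0 < k.re) (hk_im : 0 < k.im) :
    Continuous (fun l : ℝ => ((l:ℂ)^2 - k^2) ^ ((1:ℂ)/2)) := by
  rw [_root_.continuous_iff_continuousAt]
  intro l
  have hbase : ContinuousAt (fun l : ℝ => ((l:ℂ)^2 - k^2)) l := by fun_prop
  have hslit : ((l:ℂ)^2 - k^2) ∈ Complex.slitPlane := by
    rw [Complex.mem_slitPlane_iff]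
    right
    have : ((l:ℂ)^2 - k^2).im < 0 := by
      simp only [Complex.sub_im, pow_two, Complex.mul_im, Complex.ofReal_re, Complex.ofReal_im]
      nlinarith
    linarith
  exact ContinuousAt.cpow hbase continuousAt_const hslit

/-- Master integrable dominating family. -/
lemma smz_master (hk_re : 0 < k.re) (hk_im : 0 < k.im) {d : ℝ} (hd : 0 < d) {j : ℕ} (hj : j ≤ 2) :
    Integrable (fun l : ℝ => (|l| + Complex.abs k)^j *
      Real.exp (-((((l:ℂ)^2 - k^2) ^ ((1:ℂ)/2)).re) * d) / Real.sqrt (2 * k.re * k.im)) := by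
  set B := Complex.abs k with hB
  set q := 8/d with hq
  have hq0 : 0 < q := by rw [hq]; positivity
  set K := (1 + B) * (1 + q) with hK
  have hB0 : 0 ≤ B := AbsoluteValue.nonneg _ _
  have hK1 : (1:ℝ) ≤ K := by rw [hK]; nlinarith
  have hcont : Continuous (fun l : ℝ => (|l| + B)^j *
      Real.exp (-((((l:ℂ)^2 - k^2) ^ ((1:ℂ)/2)).re) * d) / Real.sqrt (2 * k.re * k.im)) := by
    have h1 : Continuous fun l : ℝ => ((((l:ℂ)^2 - k^2) ^ ((1:ℂ)/2)).re) :=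
      Complex.continuous_re.comp (smz_γ_cont hk_re hk_im)
    have h2 : Continuous fun l : ℝ =>
        Real.exp (-((((l:ℂ)^2 - k^2) ^ ((1:ℂ)/2)).re) * d) :=
      Real.continuous_exp.comp ((h1.neg).mul continuous_const)
    exact (((_root_.continuous_abs.add continuous_const).pow j).mul h2).div_const _
  apply smz_integrable_of_exp_decay hcont (half_pos hd)
    (C := K^2 / Real.sqrt (2 * k.re * k.im)) (R := 2 * Real.sqrt (max ((k^2).re) 0) + 1)
  intro l hl
  set a := |l| with ha
  have ha0 : 0 ≤ a := abs_nonneg l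
  set rγ := ((((l:ℂ)^2 - k^2) ^ ((1:ℂ)/2)).re) with hrγ
  have hre_big : 3/4 * a ≤ rγ := smz_γ_re_big hk_re hk_im l hl
  have hsm : (0:ℝ) ≤ Real.sqrt (2 * k.re * k.im) := Real.sqrt_nonneg _
  rw [_root_.abs_of_nonneg (by positivity)]
  -- numerator bound
  have step1 : (a + B)^j ≤ K^j * Real.exp (d/4 * a) := by
    have hexp := Real.add_one_le_exp (d/8 * a)
    have hexp1 : (1:ℝ) ≤ Real.exp (d/8 * a) := Real.one_le_exp (by positivity)
    have haux : a ≤ q * Real.exp (d/8 * a) := by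
      have h3 : d/8 * a ≤ Real.exp (d/8 * a) := by linarith
      have h4 : q * (d/8 * a) ≤ q * Real.exp (d/8 * a) :=
        mul_le_mul_of_nonneg_left h3 hq0.le
      have h5 : q * (d/8 * a) = a := by rw [hq]; field_simp
      linarith
    have hBe : B ≤ B * Real.exp (d/8 * a) := by
      nlinarith
    have hbase : a + B ≤ K * Real.exp (d/8 * a) := by
      rw [hK]
      nlinarith [mul_nonneg (mul_nonneg hB0 hq0.le) (Real.exp_nonneg (d/8*a)),
        mul_nonneg hq0.le (Real.exp_nonneg (d/8*a))]
    calc (a + B)^j ≤ (K * Real.exp (d/8 * a))^j :=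
          pow_le_pow_left₀ (by positivity) hbase j
      _ = K^j * (Real.exp (d/8 * a))^j := mul_pow _ _ _
      _ ≤ K^j * Real.exp (d/4 * a) := by
          apply mul_le_mul_of_nonneg_left _ (by positivity)
          rw [← Real.exp_nat_mul]
          apply Real.exp_le_exp.mpr
          have hj2 : (j:ℝ) ≤ 2 := by exact_mod_cast hj
          have := mul_le_mul_of_nonneg_right hj2 (by positivity : (0:ℝ) ≤ d/8 * a)
          nlinarith
  have step4 : Real.exp (-rγ * d) ≤ Real.exp (-(3*d/4) * a) := by
    apply Real.exp_le_exp.mpr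
    nlinarith
  have hnum : (a + B)^j * Real.exp (-rγ * d) ≤ K^2 * Real.exp (-(d/2) * a) := by
    calc (a + B)^j * Real.exp (-rγ * d)
        ≤ (K^j * Real.exp (d/4 * a)) * Real.exp (-(3*d/4) * a) :=
          mul_le_mul step1 step4 (Real.exp_nonneg _) (by positivity)
      _ = K^j * Real.exp (-(d/2) * a) := by
          rw [mul_assoc, ← Real.exp_add]; ring_nf
      _ ≤ K^2 * Real.exp (-(d/2) * a) := by
          apply mul_le_mul_of_nonneg_right _ (Real.exp_nonneg _)
          exact pow_le_pow_right₀ (le_trans (by norm_num) hK1) hj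
  calc (a + B)^j * Real.exp (-rγ * d) / Real.sqrt (2 * k.re * k.im)
      ≤ K^2 * Real.exp (-(d/2) * a) / Real.sqrt (2 * k.re * k.im) := by gcongr
    _ = K^2 / Real.sqrt (2 * k.re * k.im) * Real.exp (-(d/2) * a) := by ring

lemma smz_workhorse (φ ψ : ℝ → ℂ) (hφ : Continuous φ) (hψ : Continuous ψ)
    (t₀ ε : ℝ) (hε : 0 < ε) (g : ℝ → ℝ) (hg : Integrable g)
    (hbound : ∀ t ∈ Metric.ball t₀ ε, ∀ l : ℝ, ‖φ l * ψ l * Complex.exp (t * ψ l)‖ ≤ g l)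
    (hint : Integrable (fun l => φ l * Complex.exp (t₀ * ψ l))) :
    Integrable (fun l => φ l * ψ l * Complex.exp (t₀ * ψ l)) ∧
      HasDerivAt (fun t : ℝ => ∫ l : ℝ, φ l * Complex.exp (t * ψ l))
        (∫ l : ℝ, φ l * ψ l * Complex.exp (t₀ * ψ l)) t₀ := by
  have hFmeas : ∀ t : ℝ, AEStronglyMeasurable (fun l => φ l * Complex.exp (t * ψ l))
      (volume : Measure ℝ) := fun t =>
    (hφ.mul (Complex.continuous_exp.comp ((continuous_const.mul hψ)))).aestronglyMeasurable
  have hF'meas : AEStronglyMeasurable (fun l => φ l * ψ l * Complex.exp (t₀ * ψ l))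
      (volume : Measure ℝ) :=
    ((hφ.mul hψ).mul (Complex.continuous_exp.comp (continuous_const.mul hψ))).aestronglyMeasurable
  have hdiff : ∀ᵐ l : ℝ ∂(volume : Measure ℝ), ∀ t ∈ Metric.ball t₀ ε,
      HasDerivAt (fun t : ℝ => φ l * Complex.exp (t * ψ l))
        (φ l * ψ l * Complex.exp (t * ψ l)) t := by
    refine ae_of_all _ fun l t _ => ?_
    have h1 : HasDerivAt (fun u : ℂ => Complex.exp (u * ψ l))
        (ψ l * Complex.exp ((t:ℂ) * ψ l)) (t:ℂ) := by
      simpa [mul_comm] using ((hasDerivAt_id ((t:ℂ))).mul_const (ψ l)).cexp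
    simpa [mul_assoc] using (h1.comp_ofReal).const_mul (φ l)
  exact hasDerivAt_integral_of_dominated_loc_of_deriv_le (Metric.ball_mem_nhds t₀ hε)
    (Filter.Eventually.of_forall fun t => hFmeas t) hint hF'meas
    (ae_of_all _ fun l t ht => hbound t ht l) hg hdiff

end Aux

/-- For `k ∈ ℂ` with `Re k > 0`, `Im k > 0`, and fixed `x₀, y₀ ∈ ℝ`, the
Sommerfeld integral representation
`G(x,y) = (1/4π)·∫_ℝ e^{−γ(λ)|y−y₀|}·e^{iλ(x−x₀)}/γ(λ) dλ`
possesses second partial derivatives in `x` and `y` at every point with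
`y ≠ y₀` and satisfies the homogeneous Helmholtz equation
`∂²G/∂x² + ∂²G/∂y² + k²·G = 0` there. -/
theorem sommerfeld_integral_satisfies_helmholtz (k : ℂ)
    (hk_re : 0 < k.re) (hk_im : 0 < k.im) (x₀ y₀ : ℝ)
    (γ : ℝ → ℂ) (hγ : ∀ l : ℝ, γ l = ((l : ℂ) ^ 2 - k ^ 2) ^ ((1 : ℂ) / 2))
    (G : ℝ → ℝ → ℂ)
    (hG : ∀ x y : ℝ, G x y = (1 / (4 * (Real.pi : ℂ))) *
      ∫ l : ℝ, Complex.exp (-γ l * |y - y₀|) *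
        Complex.exp (Complex.I * l * (x - x₀)) / γ l)
    (x y : ℝ) (hy : y ≠ y₀) :
    ∃ Gx Gxx Gy Gyy : ℂ,
      HasDerivAt (fun t : ℝ => G t y) Gx x ∧
      HasDerivAt (fun t : ℝ => deriv (fun s : ℝ => G s y) t) Gxx x ∧
      HasDerivAt (fun t : ℝ => G x t) Gy y ∧
      HasDerivAt (fun t : ℝ => deriv (fun s : ℝ => G x s) t) Gyy y ∧
      Gxx + Gyy + k ^ 2 * G x y = 0 := by
  set c : ℂ := 1 / (4 * (Real.pi : ℂ)) with hc
  -- basic facts about γ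
  have hne : ∀ l : ℝ, γ l ≠ 0 := fun l => by rw [hγ l]; exact smz_γ_ne hk_re hk_im l
  have hsq : ∀ l : ℝ, γ l ^ 2 = (l:ℂ)^2 - k^2 := fun l => by
    rw [hγ l]; exact smz_γ_sq hk_re hk_im l
  have hre0 : ∀ l : ℝ, 0 ≤ (γ l).re := fun l => by
    rw [hγ l]; exact smz_γ_re_nonneg hk_re hk_im l
  have hlow : ∀ l : ℝ, Real.sqrt (2*k.re*k.im) ≤ Complex.abs (γ l) := fun l => by
    rw [hγ l]; exact smz_γ_norm_lower hk_re hk_im l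
  have hup : ∀ l : ℝ, Complex.abs (γ l) ≤ |l| + Complex.abs k := fun l => by
    rw [hγ l]; exact smz_γ_norm_upper hk_re hk_im l
  have hcont : Continuous γ := by
    have hfe : γ = fun l : ℝ => ((l:ℂ)^2 - k^2) ^ ((1:ℂ)/2) := funext hγ
    rw [hfe]; exact smz_γ_cont hk_re hk_im
  have hm : (0:ℝ) < Real.sqrt (2*k.re*k.im) := Real.sqrt_pos.mpr (by positivity)
  have habs_pos : ∀ l : ℝ, 0 < Complex.abs (γ l) := fun l => lt_of_lt_of_le hm (hlow l)
  have masterγ : ∀ d : ℝ, 0 < d → ∀ j : ℕ, j ≤ 2 → Integrable (fun l : ℝ =>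
      (|l| + Complex.abs k)^j * Real.exp (-(γ l).re * d) / Real.sqrt (2*k.re*k.im)) := by
    intro d hd j hj
    have h := smz_master (k := k) hk_re hk_im hd hj
    have hfe : (fun l : ℝ => (|l| + Complex.abs k)^j *
        Real.exp (-((((l:ℂ)^2 - k^2) ^ ((1:ℂ)/2)).re) * d) / Real.sqrt (2*k.re*k.im))
        = (fun l : ℝ => (|l| + Complex.abs k)^j *
        Real.exp (-(γ l).re * d) / Real.sqrt (2*k.re*k.im)) := by
      funext l; rw [hγ l]
    rwa [hfe] at h
  have hd₀ : (0:ℝ) < |y - y₀| := abs_pos.mpr (sub_ne_zero.mpr hy)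
  -- x-direction data
  set φx : ℝ → ℂ := fun l => Complex.exp (-γ l * (|y - y₀| : ℝ)) *
    Complex.exp (-(Complex.I * l * x₀)) / γ l with hφxdef
  set ψx : ℝ → ℂ := fun l => Complex.I * l with hψxdef
  have hφx_cont : Continuous φx := by
    apply Continuous.div _ _ hne
    · exact (Complex.continuous_exp.comp ((hcont.neg).mul continuous_const)).mul
        (Complex.continuous_exp.comp
          (((continuous_const.mul Complex.continuous_ofReal).mul continuous_const).neg))
    · exact hcont
  have hψx_cont : Continuous ψx := continuous_const.mul Complex.continuous_ofReal
  have hψx_norm : ∀ l : ℝ, Complex.abs (ψx l) = |l| := by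
    intro l; rw [hψxdef]; simp
  have hexpx_norm : ∀ (t l : ℝ), Complex.abs (Complex.exp ((t:ℂ) * ψx l)) = 1 := by
    intro t l
    rw [hψxdef, Complex.abs_exp]
    simp [Complex.mul_re, Complex.mul_im]
  have hφx_norm : ∀ l : ℝ, Complex.abs (φx l)
      = Real.exp (-(γ l).re * |y - y₀|) / Complex.abs (γ l) := by
    intro l
    rw [hφxdef]
    rw [map_div₀, map_mul, Complex.abs_exp, Complex.abs_exp]
    congr 2
    simp [Complex.mul_re]
  -- bound helper, x-direction
  have hxj : ∀ j : ℕ, j ≤ 2 → ∀ l : ℝ,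
      Real.exp (-(γ l).re * |y - y₀|) / Complex.abs (γ l) * |l|^j
      ≤ (|l| + Complex.abs k)^j * Real.exp (-(γ l).re * |y - y₀|)
        / Real.sqrt (2*k.re*k.im) := by
    intro j hj l
    have h1 : |l|^j ≤ (|l| + Complex.abs k)^j :=
      pow_le_pow_left₀ (abs_nonneg l) (le_add_of_nonneg_right (AbsoluteValue.nonneg _ _)) j
    have h2 : Real.exp (-(γ l).re * |y - y₀|) / Complex.abs (γ l)
        ≤ Real.exp (-(γ l).re * |y - y₀|) / Real.sqrt (2*k.re*k.im) := by
      apply div_le_div_of_nonneg_left (Real.exp_nonneg _) hm (hlow l)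
    calc Real.exp (-(γ l).re * |y - y₀|) / Complex.abs (γ l) * |l|^j
        ≤ Real.exp (-(γ l).re * |y - y₀|) / Real.sqrt (2*k.re*k.im)
          * (|l| + Complex.abs k)^j := by
          apply mul_le_mul h2 h1 (by positivity) (by positivity)
      _ = (|l| + Complex.abs k)^j * Real.exp (-(γ l).re * |y - y₀|)
          / Real.sqrt (2*k.re*k.im) := by ring
  have hintx : ∀ t : ℝ, Integrable (fun l : ℝ => φx l * Complex.exp ((t:ℂ) * ψx l)) := by
    intro t
    refine ((masterγ _ hd₀ 0 (by norm_num)).mono'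
      ((hφx_cont.mul (Complex.continuous_exp.comp
        (continuous_const.mul hψx_cont))).aestronglyMeasurable) (ae_of_all _ fun l => ?_))
    rw [Complex.norm_eq_abs, map_mul, hφx_norm l, hexpx_norm t l, mul_one]
    have := hxj 0 (by norm_num) l
    simpa using this
  have hX1 : ∀ t₁ : ℝ,
      Integrable (fun l : ℝ => φx l * ψx l * Complex.exp ((t₁:ℂ) * ψx l)) ∧
      HasDerivAt (fun t : ℝ => ∫ l : ℝ, φx l * Complex.exp ((t:ℂ) * ψx l))
        (∫ l : ℝ, φx l * ψx l * Complex.exp ((t₁:ℂ) * ψx l)) t₁ := by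
    intro t₁
    refine smz_workhorse φx ψx hφx_cont hψx_cont t₁ 1 one_pos _
      (masterγ _ hd₀ 1 (by norm_num)) (fun t _ l => ?_) (hintx t₁)
    rw [Complex.norm_eq_abs, map_mul, map_mul, hφx_norm l, hexpx_norm t l, hψx_norm l, mul_one]
    have := hxj 1 (by norm_num) l
    simpa using this
  have hX2 :
      Integrable (fun l : ℝ => φx l * ψx l * ψx l * Complex.exp ((x:ℂ) * ψx l)) ∧
      HasDerivAt (fun t : ℝ => ∫ l : ℝ, φx l * ψx l * Complex.exp ((t:ℂ) * ψx l))
        (∫ l : ℝ, φx l * ψx l * ψx l * Complex.exp ((x:ℂ) * ψx l)) x := by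
    refine smz_workhorse (fun l => φx l * ψx l) ψx (hφx_cont.mul hψx_cont) hψx_cont x 1
      one_pos _ (masterγ _ hd₀ 2 (by norm_num)) (fun t _ l => ?_) ((hX1 x).1)
    rw [Complex.norm_eq_abs, map_mul, map_mul, map_mul, hφx_norm l, hexpx_norm t l,
      hψx_norm l, mul_one]
    have := hxj 2 (by norm_num) l
    calc Real.exp (-(γ l).re * |y - y₀|) / Complex.abs (γ l) * |l| * |l|
        = Real.exp (-(γ l).re * |y - y₀|) / Complex.abs (γ l) * |l|^2 := by ring
      _ ≤ _ := this
  -- pointwise identification with the Sommerfeld integrand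
  have hptx : ∀ (t l : ℝ), φx l * Complex.exp ((t:ℂ) * ψx l)
      = Complex.exp (-γ l * (|y - y₀| : ℝ)) *
        Complex.exp (Complex.I * l * ((t:ℂ) - (x₀:ℂ))) / γ l := by
    intro t l
    rw [hφxdef, hψxdef]
    rw [div_mul_eq_mul_div, mul_assoc, ← Complex.exp_add]
    congr 3
    ring
  have hGx_eq : ∀ t : ℝ, G t y = c * ∫ l : ℝ, φx l * Complex.exp ((t:ℂ) * ψx l) := by
    intro t
    rw [hG t y]
    congr 1
    refine (integral_congr_ae (ae_of_all _ fun l => ?_)).symm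
    exact hptx t l
  have hGxfun : (fun t : ℝ => G t y)
      = fun t : ℝ => c * ∫ l : ℝ, φx l * Complex.exp ((t:ℂ) * ψx l) := funext hGx_eq
  have hDx : ∀ t : ℝ, HasDerivAt (fun t : ℝ => G t y)
      (c * ∫ l : ℝ, φx l * ψx l * Complex.exp ((t:ℂ) * ψx l)) t := by
    intro t
    rw [hGxfun]
    exact (hX1 t).2.const_mul c
  have hderivx : (deriv fun s : ℝ => G s y)
      = fun t : ℝ => c * ∫ l : ℝ, φx l * ψx l * Complex.exp ((t:ℂ) * ψx l) :=
    funext fun t => (hDx t).deriv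
  have hDxx : HasDerivAt (fun t : ℝ => deriv (fun s : ℝ => G s y) t)
      (c * ∫ l : ℝ, φx l * ψx l * ψx l * Complex.exp ((x:ℂ) * ψx l)) x := by
    have h := hX2.2.const_mul c
    have : (fun t : ℝ => deriv (fun s : ℝ => G s y) t)
        = fun t : ℝ => c * ∫ l : ℝ, φx l * ψx l * Complex.exp ((t:ℂ) * ψx l) := by
      funext t; rw [hderivx]
    rw [this]
    exact h
  -- y-direction
  set σ : ℝ := if y₀ < y then 1 else -1 with hσdef
  have hσ1 : σ = 1 ∨ σ = -1 := by
    rw [hσdef]; by_cases hcc : y₀ < y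
    · left; rw [if_pos hcc]
    · right; rw [if_neg hcc]
  have hσball : ∀ t : ℝ, t ∈ Metric.ball y (|y - y₀|/2) →
      |t - y₀| = σ * (t - y₀) ∧ |y - y₀|/2 ≤ σ * (t - y₀) := by
    intro t ht
    rw [Metric.mem_ball, Real.dist_eq] at ht
    obtain ⟨ht1, ht2⟩ := abs_lt.mp ht
    by_cases hcc : y₀ < y
    · have hdd : |y - y₀| = y - y₀ := abs_of_pos (by linarith)
      rw [hdd] at ht1 ht2
      rw [hσdef, if_pos hcc, hdd]
      have htpos : 0 < t - y₀ := by linarith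
      rw [abs_of_pos htpos, one_mul]
      exact ⟨rfl, by linarith⟩
    · have hlt : y < y₀ := lt_of_le_of_ne (not_lt.mp hcc) hy
      have hdd : |y - y₀| = -(y - y₀) := abs_of_neg (by linarith)
      rw [hdd] at ht1 ht2
      rw [hσdef, if_neg hcc, hdd]
      have htneg : t - y₀ < 0 := by linarith
      rw [abs_of_neg htneg]
      exact ⟨by ring, by linarith⟩
  set φy : ℝ → ℂ := fun l => Complex.exp (γ l * σ * y₀) *
    Complex.exp (Complex.I * l * ((x:ℂ) - (x₀:ℂ))) / γ l with hφydef
  set ψy : ℝ → ℂ := fun l => -(σ:ℂ) * γ l with hψydef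
  have hφy_cont : Continuous φy := by
    apply Continuous.div _ _ hne
    · exact (Complex.continuous_exp.comp ((hcont.mul continuous_const).mul continuous_const)).mul
        (Complex.continuous_exp.comp
          ((continuous_const.mul Complex.continuous_ofReal).mul continuous_const))
    · exact hcont
  have hψy_cont : Continuous ψy := continuous_const.mul hcont
  have hψy_norm : ∀ l : ℝ, Complex.abs (ψy l) = Complex.abs (γ l) := by
    intro l
    rw [hψydef, map_mul]
    have : Complex.abs (-(σ:ℂ)) = 1 := by
      rcases hσ1 with h | h <;> rw [h] <;> norm_num
    rw [this, one_mul]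
  -- norm of φy l * exp(t ψy l)
  have hφy_exp_norm : ∀ (t l : ℝ), Complex.abs (φy l * Complex.exp ((t:ℂ) * ψy l))
      = Real.exp (-(γ l).re * (σ * (t - y₀))) / Complex.abs (γ l) := by
    intro t l
    rw [hφydef, hψydef]
    rw [map_mul, map_div₀, map_mul, Complex.abs_exp, Complex.abs_exp, Complex.abs_exp]
    have h1 : (γ l * (σ:ℂ) * (y₀:ℂ)).re = (γ l).re * σ * y₀ := by
      simp [Complex.mul_re]
    have h2 : ((Complex.I * (l:ℂ) * ((x:ℂ) - (x₀:ℂ)))).re = 0 := by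
      simp [Complex.mul_re, Complex.mul_im]
    have h3 : (((t:ℂ)) * (-(σ:ℂ) * γ l)).re = -(t * σ * (γ l).re) := by
      simp [Complex.mul_re]; ring
    rw [h1, h2, h3, Real.exp_zero, mul_one, div_mul_eq_mul_div, ← Real.exp_add]
    congr 2
    ring
  -- bound helper, y-direction
  have hyj : ∀ j : ℕ, j ≤ 2 → ∀ l : ℝ, Complex.abs (γ l)^j / Complex.abs (γ l)
      ≤ (|l| + Complex.abs k)^j / Real.sqrt (2*k.re*k.im) := by
    intro j hj l
    interval_cases j
    · simpa using one_div_le_one_div_of_le hm (hlow l)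
    · have h := (hlow l).trans (hup l)
      rw [pow_one, pow_one, div_self (ne_of_gt (habs_pos l)), le_div_iff₀ hm, one_mul]
      exact h
    · rw [pow_two, pow_two, mul_div_assoc, div_self (ne_of_gt (habs_pos l)), mul_one,
        le_div_iff₀ hm]
      nlinarith [hup l, hlow l, habs_pos l, hm]
  have hexpy_mono : ∀ (t l : ℝ), t ∈ Metric.ball y (|y - y₀|/2) →
      Real.exp (-(γ l).re * (σ * (t - y₀))) ≤ Real.exp (-(γ l).re * (|y - y₀|/2)) := by
    intro t l ht
    apply Real.exp_le_exp.mpr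
    have h1 := (hσball t ht).2
    have h2 := hre0 l
    nlinarith
  have hε2 : (0:ℝ) < |y - y₀|/2 := by positivity
  have hε4 : (0:ℝ) < |y - y₀|/4 := by positivity
  have hbally : ∀ t₁ ∈ Metric.ball y (|y - y₀|/4), ∀ t ∈ Metric.ball t₁ (|y - y₀|/4),
      t ∈ Metric.ball y (|y - y₀|/2) := by
    intro t₁ ht₁ t ht
    rw [Metric.mem_ball] at *
    calc dist t y ≤ dist t t₁ + dist t₁ y := dist_triangle _ _ _
      _ < |y - y₀|/4 + |y - y₀|/4 := add_lt_add ht ht₁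
      _ = |y - y₀|/2 := by ring
  have hbndy : ∀ j : ℕ, j ≤ 2 → ∀ t ∈ Metric.ball y (|y - y₀|/2), ∀ l : ℝ,
      Real.exp (-(γ l).re * (σ * (t - y₀))) * (Complex.abs (γ l)^j / Complex.abs (γ l))
      ≤ (|l| + Complex.abs k)^j * Real.exp (-(γ l).re * (|y - y₀|/2))
        / Real.sqrt (2*k.re*k.im) := by
    intro j hj t ht l
    calc Real.exp (-(γ l).re * (σ * (t - y₀))) * (Complex.abs (γ l)^j / Complex.abs (γ l))
        ≤ Real.exp (-(γ l).re * (|y - y₀|/2)) * ((|l| + Complex.abs k)^j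
          / Real.sqrt (2*k.re*k.im)) :=
          mul_le_mul (hexpy_mono t l ht) (hyj j hj l) (by positivity) (Real.exp_nonneg _)
      _ = (|l| + Complex.abs k)^j * Real.exp (-(γ l).re * (|y - y₀|/2))
          / Real.sqrt (2*k.re*k.im) := by ring
  have hinty : ∀ t ∈ Metric.ball y (|y - y₀|/2),
      Integrable (fun l : ℝ => φy l * Complex.exp ((t:ℂ) * ψy l)) := by
    intro t ht
    refine ((masterγ _ hε2 0 (by norm_num)).mono'
      ((hφy_cont.mul (Complex.continuous_exp.comp
        (continuous_const.mul hψy_cont))).aestronglyMeasurable) (ae_of_all _ fun l => ?_))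
    rw [Complex.norm_eq_abs, hφy_exp_norm t l]
    calc Real.exp (-(γ l).re * (σ * (t - y₀))) / Complex.abs (γ l)
        = Real.exp (-(γ l).re * (σ * (t - y₀)))
          * (Complex.abs (γ l)^0 / Complex.abs (γ l)) := by rw [pow_zero]; ring
      _ ≤ _ := hbndy 0 (by norm_num) t ht l
  have hY1 : ∀ t₁ ∈ Metric.ball y (|y - y₀|/4),
      Integrable (fun l : ℝ => φy l * ψy l * Complex.exp ((t₁:ℂ) * ψy l)) ∧
      HasDerivAt (fun t : ℝ => ∫ l : ℝ, φy l * Complex.exp ((t:ℂ) * ψy l))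
        (∫ l : ℝ, φy l * ψy l * Complex.exp ((t₁:ℂ) * ψy l)) t₁ := by
    intro t₁ ht₁
    refine smz_workhorse φy ψy hφy_cont hψy_cont t₁ (|y - y₀|/4) hε4 _
      (masterγ _ hε2 1 (by norm_num)) (fun t ht l => ?_)
      (hinty t₁ (Metric.ball_subset_ball (by linarith) ht₁))
    have htm := hbally t₁ ht₁ t ht
    rw [Complex.norm_eq_abs,
      show φy l * ψy l * Complex.exp ((t:ℂ) * ψy l)
        = (φy l * Complex.exp ((t:ℂ) * ψy l)) * ψy l by ring,
      map_mul, hφy_exp_norm t l, hψy_norm l]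
    calc Real.exp (-(γ l).re * (σ * (t - y₀))) / Complex.abs (γ l) * Complex.abs (γ l)
        = Real.exp (-(γ l).re * (σ * (t - y₀)))
          * (Complex.abs (γ l)^1 / Complex.abs (γ l)) := by
          rw [pow_one]; ring
      _ ≤ _ := hbndy 1 (by norm_num) t htm l
  have hymem : y ∈ Metric.ball y (|y - y₀|/4) := Metric.mem_ball_self hε4
  have hY2 :
      Integrable (fun l : ℝ => φy l * ψy l * ψy l * Complex.exp ((y:ℂ) * ψy l)) ∧
      HasDerivAt (fun t : ℝ => ∫ l : ℝ, φy l * ψy l * Complex.exp ((t:ℂ) * ψy l))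
        (∫ l : ℝ, φy l * ψy l * ψy l * Complex.exp ((y:ℂ) * ψy l)) y := by
    refine smz_workhorse (fun l => φy l * ψy l) ψy (hφy_cont.mul hψy_cont) hψy_cont y
      (|y - y₀|/4) hε4 _ (masterγ _ hε2 2 (by norm_num)) (fun t ht l => ?_)
      ((hY1 y hymem).1)
    have htm := hbally y hymem t ht
    rw [Complex.norm_eq_abs,
      show φy l * ψy l * ψy l * Complex.exp ((t:ℂ) * ψy l)
        = (φy l * Complex.exp ((t:ℂ) * ψy l)) * (ψy l * ψy l) by ring,
      map_mul, hφy_exp_norm t l, map_mul, hψy_norm l]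
    calc Real.exp (-(γ l).re * (σ * (t - y₀))) / Complex.abs (γ l)
          * (Complex.abs (γ l) * Complex.abs (γ l))
        = Real.exp (-(γ l).re * (σ * (t - y₀)))
          * (Complex.abs (γ l)^2 / Complex.abs (γ l)) := by
          have hgne : Complex.abs (γ l) ≠ 0 := ne_of_gt (habs_pos l)
          rw [pow_two]
          field_simp
          try ring
      _ ≤ _ := hbndy 2 (by norm_num) t htm l
  -- pointwise identification, y-direction
  have hpty : ∀ (t : ℝ), t ∈ Metric.ball y (|y - y₀|/2) → ∀ l : ℝ,
      φy l * Complex.exp ((t:ℂ) * ψy l)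
      = Complex.exp (-γ l * (|t - y₀| : ℝ)) *
        Complex.exp (Complex.I * l * ((x:ℂ) - (x₀:ℂ))) / γ l := by
    intro t ht l
    have habs : ((|t - y₀| : ℝ) : ℂ) = (σ:ℂ) * ((t:ℂ) - (y₀:ℂ)) := by
      rw [(hσball t ht).1]; push_cast; ring
    rw [hφydef, hψydef, habs]
    rw [div_mul_eq_mul_div, mul_right_comm, ← Complex.exp_add]
    congr 3
    ring
  have hGy_eq : ∀ t : ℝ, t ∈ Metric.ball y (|y - y₀|/2) →
      G x t = c * ∫ l : ℝ, φy l * Complex.exp ((t:ℂ) * ψy l) := by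
    intro t ht
    rw [hG x t]
    congr 1
    refine (integral_congr_ae (ae_of_all _ fun l => ?_)).symm
    exact hpty t ht l
  have hball2 : Metric.ball y (|y - y₀|/2) ∈ nhds y := Metric.ball_mem_nhds y hε2
  have hGyev : (fun t : ℝ => G x t)
      =ᶠ[nhds y] fun t : ℝ => c * ∫ l : ℝ, φy l * Complex.exp ((t:ℂ) * ψy l) :=
    Filter.eventuallyEq_of_mem hball2 (fun t ht => hGy_eq t ht)
  have hDy : HasDerivAt (fun t : ℝ => G x t)
      (c * ∫ l : ℝ, φy l * ψy l * Complex.exp ((y:ℂ) * ψy l)) y :=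
    ((hY1 y hymem).2.const_mul c).congr_of_eventuallyEq hGyev
  have hderivy : (deriv fun s : ℝ => G x s)
      =ᶠ[nhds y] fun t : ℝ => c * ∫ l : ℝ, φy l * ψy l * Complex.exp ((t:ℂ) * ψy l) := by
    filter_upwards [Metric.ball_mem_nhds y hε4] with t₁ ht₁
    have hmem2 : Metric.ball y (|y - y₀|/2) ∈ nhds t₁ :=
      Metric.isOpen_ball.mem_nhds (Metric.ball_subset_ball (by linarith) ht₁)
    have hGyev' : (fun t : ℝ => G x t)
        =ᶠ[nhds t₁] fun t : ℝ => c * ∫ l : ℝ, φy l * Complex.exp ((t:ℂ) * ψy l) :=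
      Filter.eventuallyEq_of_mem hmem2 (fun t ht => hGy_eq t ht)
    exact (((hY1 t₁ ht₁).2.const_mul c).congr_of_eventuallyEq hGyev').deriv
  have hDyy : HasDerivAt (fun t : ℝ => deriv (fun s : ℝ => G x s) t)
      (c * ∫ l : ℝ, φy l * ψy l * ψy l * Complex.exp ((y:ℂ) * ψy l)) y :=
    (hY2.2.const_mul c).congr_of_eventuallyEq hderivy
  -- the Helmholtz identity
  have hσsq : ((σ:ℂ))^2 = 1 := by
    rcases hσ1 with h | h <;> rw [h] <;> norm_num
  have hf1 : ∀ l : ℝ, φx l * ψx l * ψx l * Complex.exp ((x:ℂ) * ψx l)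
      = -((l:ℂ)^2) * (φx l * Complex.exp ((x:ℂ) * ψx l)) := by
    intro l
    have : ψx l * ψx l = -((l:ℂ)^2) := by
      rw [hψxdef]
      calc Complex.I * (l:ℂ) * (Complex.I * (l:ℂ))
          = Complex.I * Complex.I * ((l:ℂ) * (l:ℂ)) := by ring
        _ = -((l:ℂ)^2) := by rw [Complex.I_mul_I]; ring
    calc φx l * ψx l * ψx l * Complex.exp ((x:ℂ) * ψx l)
        = (ψx l * ψx l) * (φx l * Complex.exp ((x:ℂ) * ψx l)) := by ring
      _ = -((l:ℂ)^2) * (φx l * Complex.exp ((x:ℂ) * ψx l)) := by rw [this]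
  have hf2 : ∀ l : ℝ, φy l * ψy l * ψy l * Complex.exp ((y:ℂ) * ψy l)
      = ((l:ℂ)^2 - k^2) * (φy l * Complex.exp ((y:ℂ) * ψy l)) := by
    intro l
    have : ψy l * ψy l = (l:ℂ)^2 - k^2 := by
      rw [hψydef]
      calc -(σ:ℂ) * γ l * (-(σ:ℂ) * γ l) = ((σ:ℂ))^2 * (γ l)^2 := by ring
        _ = (l:ℂ)^2 - k^2 := by rw [hσsq, hsq l]; ring
    calc φy l * ψy l * ψy l * Complex.exp ((y:ℂ) * ψy l)
        = (ψy l * ψy l) * (φy l * Complex.exp ((y:ℂ) * ψy l)) := by ring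
      _ = ((l:ℂ)^2 - k^2) * (φy l * Complex.exp ((y:ℂ) * ψy l)) := by rw [this]
  have hymem2 : y ∈ Metric.ball y (|y - y₀|/2) := Metric.mem_ball_self hε2
  have hFxy : ∀ l : ℝ, φy l * Complex.exp ((y:ℂ) * ψy l)
      = φx l * Complex.exp ((x:ℂ) * ψx l) := by
    intro l
    rw [hpty y hymem2 l, hptx x l]
  have hi1 : Integrable (fun l : ℝ => φx l * ψx l * ψx l * Complex.exp ((x:ℂ) * ψx l)) :=
    hX2.1
  have hi2 : Integrable (fun l : ℝ => φy l * ψy l * ψy l * Complex.exp ((y:ℂ) * ψy l)) :=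
    hY2.1
  have hi3 : Integrable (fun l : ℝ => k^2 * (φx l * Complex.exp ((x:ℂ) * ψx l))) :=
    (hintx x).const_mul _
  have hzero : ∀ l : ℝ, φx l * ψx l * ψx l * Complex.exp ((x:ℂ) * ψx l)
      + (φy l * ψy l * ψy l * Complex.exp ((y:ℂ) * ψy l)
        + k^2 * (φx l * Complex.exp ((x:ℂ) * ψx l))) = 0 := by
    intro l
    rw [hf1 l, hf2 l, hFxy l]
    ring
  have halg : (c * ∫ l : ℝ, φx l * ψx l * ψx l * Complex.exp ((x:ℂ) * ψx l))
      + (c * ∫ l : ℝ, φy l * ψy l * ψy l * Complex.exp ((y:ℂ) * ψy l))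
      + k^2 * G x y = 0 := by
    have hGxy : G x y = c * ∫ l : ℝ, φx l * Complex.exp ((x:ℂ) * ψx l) := hGx_eq x
    have hmul : ∫ l : ℝ, k^2 * (φx l * Complex.exp ((x:ℂ) * ψx l))
        = k^2 * ∫ l : ℝ, φx l * Complex.exp ((x:ℂ) * ψx l) :=
      integral_const_mul _ _
    have hadd : ∫ l : ℝ, (φx l * ψx l * ψx l * Complex.exp ((x:ℂ) * ψx l)
        + (φy l * ψy l * ψy l * Complex.exp ((y:ℂ) * ψy l)
          + k^2 * (φx l * Complex.exp ((x:ℂ) * ψx l))))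
        = (∫ l : ℝ, φx l * ψx l * ψx l * Complex.exp ((x:ℂ) * ψx l))
          + ((∫ l : ℝ, φy l * ψy l * ψy l * Complex.exp ((y:ℂ) * ψy l))
            + ∫ l : ℝ, k^2 * (φx l * Complex.exp ((x:ℂ) * ψx l))) := by
      have haux := integral_add hi1 (hi2.add hi3)
      simp only [Pi.add_apply] at haux
      rw [haux, integral_add hi2 hi3]
    have hz : ∫ l : ℝ, (φx l * ψx l * ψx l * Complex.exp ((x:ℂ) * ψx l)
        + (φy l * ψy l * ψy l * Complex.exp ((y:ℂ) * ψy l)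
          + k^2 * (φx l * Complex.exp ((x:ℂ) * ψx l)))) = 0 := by
      simp only [hzero]
      exact integral_zero _ _
    rw [hGxy]
    calc (c * ∫ l : ℝ, φx l * ψx l * ψx l * Complex.exp ((x:ℂ) * ψx l))
        + (c * ∫ l : ℝ, φy l * ψy l * ψy l * Complex.exp ((y:ℂ) * ψy l))
        + k^2 * (c * ∫ l : ℝ, φx l * Complex.exp ((x:ℂ) * ψx l))
        = c * ((∫ l : ℝ, φx l * ψx l * ψx l * Complex.exp ((x:ℂ) * ψx l))
          + ((∫ l : ℝ, φy l * ψy l * ψy l * Complex.exp ((y:ℂ) * ψy l))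
            + ∫ l : ℝ, k^2 * (φx l * Complex.exp ((x:ℂ) * ψx l)))) := by
          rw [hmul]; ring
      _ = 0 := by rw [← hadd, hz, mul_zero]
  exact ⟨_, _, _, _, hDx x, hDxx, hDy, hDyy, halg⟩
end

section
/- Let k ∈ ℂ with Re k > 0 and Im k > 0, let α ∈ ℂ with Im α ≥ 0, and fix x₀ ∈ ℝ and y₀ > 0. For 0 ≤ y < y₀ define g(x, y) = (1/4π)·∫_ℝ [e^{γ(λ)(y−y₀)} + e^{−γ(λ)(y+y₀)}·((γ(λ)+iα)/(γ(λ)−iα))]·e^{iλ(x−x₀)}/γ(λ) dλ. Then for every x ∈ ℝ, the map y ↦ g(x, y) is differentiable at y = 0 and the homogeneous impedance condition −(∂g/∂y)(x, 0) − iα·g(x, 0) = 0 holds. -/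
open MeasureTheory

/-- `1 + x ≤ t⁻¹ e^{tx}` for `0 < t ≤ 1`, `0 ≤ x`. -/
lemma aux_one_add_le_exp {t x : ℝ} (ht0 : 0 < t) (ht1 : t ≤ 1) (hx : 0 ≤ x) :
    1 + x ≤ t⁻¹ * Real.exp (t * x) := by
  have h := Real.add_one_le_exp (t * x)
  have h2 : t * (1 + x) ≤ Real.exp (t * x) := by nlinarith
  calc 1 + x = t⁻¹ * (t * (1 + x)) := by field_simp
    _ ≤ t⁻¹ * Real.exp (t * x) := by
        apply mul_le_mul_of_nonneg_left h2 (by positivity)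

/-- Basic properties of the principal square root `γ(l) = (l² - k²)^{1/2}`. -/
lemma aux_gamma (k : ℂ) (hk_re : 0 < k.re) (hk_im : 0 < k.im) (l : ℝ) :
    0 < ((((l:ℂ)^2 - k^2) ^ ((1:ℂ)/2)).re) ∧
      ((((l:ℂ)^2 - k^2) ^ ((1:ℂ)/2)))^2 = (l:ℂ)^2 - k^2 := by
  have him : ((l:ℂ)^2 - k^2).im ≠ 0 := by
    have : ((l:ℂ)^2 - k^2).im = -(2 * k.re * k.im) := by
      simp [Complex.sub_im, pow_two, Complex.mul_im]; ring
    rw [this]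
    have : (0:ℝ) < 2 * k.re * k.im := by positivity
    linarith
  constructor
  · set z : ℂ := (l:ℂ)^2 - k^2 with hz
    have hz0 : z ≠ 0 := fun h => him (by simp [h])
    rw [Complex.cpow_def_of_ne_zero hz0, Complex.exp_re]
    apply mul_pos (Real.exp_pos _)
    have h1 : (Complex.log z * ((1:ℂ)/2)).im = z.arg / 2 := by
      simp [Complex.mul_im, Complex.log_im, Complex.log_re]; ring
    rw [h1]
    apply Real.cos_pos_of_mem_Ioo
    constructor
    · have := Complex.neg_pi_lt_arg z; linarith
    · have h2 : z.arg ≠ Real.pi := by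
        intro h; rw [Complex.arg_eq_pi_iff] at h; exact him h.2
      have := lt_of_le_of_ne (Complex.arg_le_pi z) h2
      linarith
  · rw [one_div, show ((2:ℂ)⁻¹) = ((2:ℕ):ℂ)⁻¹ by norm_num]
    rw [← Complex.cpow_nat_mul, mul_inv_cancel₀ (by norm_num), Complex.cpow_one]

set_option maxHeartbeats 1000000 in
/-- For `k ∈ ℂ` with `Re k > 0`, `Im k > 0`, `α ∈ ℂ` with `Im α ≥ 0`, and a
source at `(x₀, y₀)` with `y₀ > 0`: the spectral representation of the
half-space impedance Green's function,
`g(x,y) = (1/4π)·∫_ℝ [e^{γ(λ)(y−y₀)} + e^{−γ(λ)(y+y₀)}·((γ(λ)+iα)/(γ(λ)−iα))]·e^{iλ(x−x₀)}/γ(λ) dλ`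
for `0 ≤ y < y₀`, is differentiable in `y` at `y = 0` (from within `[0,∞)`,
where it is defined) and satisfies the homogeneous impedance condition
`−∂g/∂y − iα·g = 0` on the interface `y = 0`. -/
theorem spectral_representation_impedance_condition (k α : ℂ)
    (hk_re : 0 < k.re) (hk_im : 0 < k.im) (hα : 0 ≤ α.im)
    (x₀ y₀ : ℝ) (hy₀ : 0 < y₀)
    (γ : ℝ → ℂ) (hγ : ∀ l : ℝ, γ l = ((l : ℂ) ^ 2 - k ^ 2) ^ ((1 : ℂ) / 2))
    (g : ℝ → ℝ → ℂ)
    (hg : ∀ x y : ℝ, 0 ≤ y → y < y₀ → g x y = (1 / (4 * (Real.pi : ℂ))) *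
      ∫ l : ℝ, (Complex.exp (γ l * (y - y₀)) +
          Complex.exp (-γ l * (y + y₀)) *
            ((γ l + Complex.I * α) / (γ l - Complex.I * α))) *
        Complex.exp (Complex.I * l * (x - x₀)) / γ l)
    (x : ℝ) :
    ∃ d : ℂ, HasDerivWithinAt (fun y : ℝ => g x y) d (Set.Ici 0) 0 ∧
      -d - Complex.I * α * g x 0 = 0 := by
  -- abbreviations
  set c : ℝ := k.re * k.im with hcdef
  have hc : 0 < c := mul_pos hk_re hk_im
  have hγre : ∀ l : ℝ, 0 < (γ l).re := fun l => by
    rw [hγ l]; exact (aux_gamma k hk_re hk_im l).1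
  have hγsq : ∀ l : ℝ, (γ l)^2 = (l:ℂ)^2 - k^2 := fun l => by
    rw [hγ l]; exact (aux_gamma k hk_re hk_im l).2
  have hγ0 : ∀ l : ℝ, γ l ≠ 0 := fun l h => by
    have := hγre l; rw [h] at this; simp at this
  have hγiα : ∀ l : ℝ, γ l - Complex.I * α ≠ 0 := by
    intro l h
    have h1 : (γ l - Complex.I * α).re = (γ l).re + α.im := by
      simp [Complex.sub_re, Complex.mul_re]
    have h2 : 0 < (γ l - Complex.I * α).re := by rw [h1]; linarith [hγre l]
    rw [h] at h2; simp at h2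
  -- real and imaginary parts
  set r : ℝ → ℝ := fun l => (γ l).re with hrdef
  set q : ℝ → ℝ := fun l => (γ l).im with hqdef
  have hrq : ∀ l, r l * q l = -c := by
    intro l
    have h1 : ((γ l)^2).im = ((l:ℂ)^2 - k^2).im := by rw [hγsq l]
    have h2 : ((γ l)^2).im = 2 * (r l * q l) := by
      simp [pow_two, Complex.mul_im, hrdef, hqdef]; ring
    have h3 : ((l:ℂ)^2 - k^2).im = -(2*c) := by
      simp [Complex.sub_im, pow_two, Complex.mul_im, hcdef]; ring
    rw [h2, h3] at h1; linarith
  have hr2 : ∀ l, (r l)^2 - (q l)^2 = l^2 - (k^2).re := by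
    intro l
    have h1 : ((γ l)^2).re = ((l:ℂ)^2 - k^2).re := by rw [hγsq l]
    have h2 : ((γ l)^2).re = (r l)^2 - (q l)^2 := by
      simp [pow_two, Complex.mul_re, hrdef, hqdef]
    have h3 : ((l:ℂ)^2 - k^2).re = l^2 - (k^2).re := by
      simp [Complex.sub_re, pow_two, Complex.mul_re]
    rw [h2, h3] at h1; linarith
  -- s l bounds |γ l|
  set s : ℝ → ℝ := fun l => Real.sqrt (l^2 + ‖k‖^2) with hsdef
  have hs0 : ∀ l, 0 < s l := by
    intro l
    apply Real.sqrt_pos.mpr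
    have : 0 < ‖k‖ := by
      apply norm_pos_iff.mpr; intro h; rw [h] at hk_re; simp at hk_re
    positivity
  have hγabs : ∀ l, (r l)^2 + (q l)^2 ≤ (s l)^2 := by
    intro l
    have h1 : ‖γ l‖ ^ 2 = ‖(γ l)^2‖ := by
      rw [norm_pow]
    have h2 : ‖(γ l)^2‖ ≤ l^2 + ‖k‖^2 := by
      rw [hγsq l]
      calc ‖(l:ℂ)^2 - k^2‖ ≤ ‖(l:ℂ)^2‖ + ‖k^2‖ :=
            norm_sub_le _ _
        _ = l^2 + ‖k‖^2 := by
            rw [norm_pow, norm_pow, Complex.norm_real, Real.norm_eq_abs]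
            rw [sq_abs]
    have h3 : (s l)^2 = l^2 + ‖k‖^2 := by
      rw [hsdef]
      exact Real.sq_sqrt (by positivity)
    have h4 : ‖γ l‖ ^ 2 = (r l)^2 + (q l)^2 := by
      rw [Complex.sq_norm, Complex.normSq_apply]; simp [hrdef, hqdef]; ring
    rw [h4] at h1
    rw [h3]; rw [h1]; exact h2
  -- lower bound r ≥ c / s
  have hrs : ∀ l, c / s l ≤ r l := by
    intro l
    rw [div_le_iff₀ (hs0 l)]
    have h1 : -(q l) ≤ s l := by
      nlinarith [hγabs l, hs0 l, sq_nonneg (r l), sq_nonneg (q l + s l)]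
    have h2 : c = r l * (-(q l)) := by have := hrq l; ring_nf; linarith [hrq l]
    rw [h2]
    apply mul_le_mul_of_nonneg_left h1 (le_of_lt (hγre l))
  have hsle : ∀ l, s l ≤ (1 + ‖k‖) * (1 + l^2) := by
    intro l
    have h1 : s l ≤ |l| + ‖k‖ := by
      rw [hsdef]
      have : l^2 + ‖k‖^2 ≤ (|l| + ‖k‖)^2 := by
        nlinarith [abs_nonneg l, norm_nonneg k, sq_abs l]
      calc Real.sqrt (l^2 + ‖k‖^2) ≤ Real.sqrt ((|l| + ‖k‖)^2) :=
            Real.sqrt_le_sqrt this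
        _ = |l| + ‖k‖ := Real.sqrt_sq (by positivity)
    have h2 : |l| ≤ 1 + l^2 := by nlinarith [sq_abs l, sq_nonneg (|l| - 1)]
    have h3 : (1:ℝ) ≤ 1 + l^2 := by nlinarith [sq_nonneg l]
    nlinarith [norm_nonneg k]
  -- continuity of γ
  have hγcont : Continuous γ := by
    have hfe : γ = fun l : ℝ => ((l:ℂ)^2 - k^2) ^ ((1:ℂ)/2) := funext hγ
    rw [hfe, continuous_iff_continuousAt]
    intro l
    apply ContinuousAt.cpow ?_ continuousAt_const ?_
    · exact ((Complex.continuous_ofReal.pow 2).sub continuous_const).continuousAt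
    · rw [Complex.mem_slitPlane_iff]
      right
      have : ((l:ℂ)^2 - k^2).im = -(2 * k.re * k.im) := by
        simp [Complex.sub_im, pow_two, Complex.mul_im]; ring
      rw [this]
      have : (0:ℝ) < 2 * k.re * k.im := by positivity
      linarith
  -- decay estimate
  obtain ⟨C, hC0, hC⟩ : ∃ C : ℝ, 0 < C ∧ ∀ l : ℝ,
      (1+l^2)^2 * Real.exp (-(y₀/2) * r l) ≤ C * (1+l^2)⁻¹ := by
    set b := y₀/2 with hb
    have hb0 : 0 < b := by positivity
    set t := min 1 (b/12) with ht
    have ht0 : 0 < t := lt_min one_pos (by positivity)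
    have ht1 : t ≤ 1 := min_le_left _ _
    have ht12 : t ≤ b/12 := min_le_right _ _
    set L2 : ℝ := 2 * ‖k‖^2 with hL2
    have hL20 : 0 ≤ L2 := by positivity
    refine ⟨max ((1+L2)^3) ((t⁻¹)^6), lt_of_lt_of_le (by positivity) (le_max_left _ _), ?_⟩
    intro l
    have hpos : (0:ℝ) < 1 + l^2 := by positivity
    have key : (1+l^2)^3 * Real.exp (-b * r l) ≤ max ((1+L2)^3) ((t⁻¹)^6) := by
      by_cases hcase : l^2 ≤ L2
      · have h1 : Real.exp (-b * r l) ≤ 1 := by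
          apply Real.exp_le_one_iff.mpr
          have := hγre l
          nlinarith
        have h2 : (1+l^2)^3 ≤ (1+L2)^3 := by
          apply pow_le_pow_left₀ (by positivity)
          linarith
        calc (1+l^2)^3 * Real.exp (-b * r l) ≤ (1+l^2)^3 * 1 :=
              mul_le_mul_of_nonneg_left h1 (by positivity)
          _ = (1+l^2)^3 := mul_one _
          _ ≤ (1+L2)^3 := h2
          _ ≤ _ := le_max_left _ _
      · push_neg at hcase
        -- r l ≥ |l| / 2
        have hk2 : (k^2).re ≤ ‖k‖^2 := by
          calc (k^2).re ≤ ‖k^2‖ := Complex.re_le_norm _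
            _ = ‖k‖^2 := norm_pow _ _
        have hrl : |l|/2 ≤ r l := by
          have h1 : l^2/2 ≤ (r l)^2 := by
            have := hr2 l
            have hq := sq_nonneg (q l)
            rw [hL2] at hcase
            nlinarith
          have := hγre l
          nlinarith [sq_abs l, abs_nonneg l]
        have hexple : Real.exp (-b * r l) ≤ Real.exp (-(b/2) * |l|) := by
          apply Real.exp_le_exp.mpr
          nlinarith
        have hpoly : (1+l^2)^3 ≤ (t⁻¹)^6 * Real.exp (6 * (t * |l|)) := by
          have h1 : 1 + l^2 ≤ (1 + |l|)^2 := by nlinarith [sq_abs l, abs_nonneg l]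
          have h2 : 1 + |l| ≤ t⁻¹ * Real.exp (t * |l|) :=
            aux_one_add_le_exp ht0 ht1 (abs_nonneg l)
          calc (1+l^2)^3 ≤ ((1 + |l|)^2)^3 := pow_le_pow_left₀ (by positivity) h1 3
            _ = (1 + |l|)^6 := by ring
            _ ≤ (t⁻¹ * Real.exp (t * |l|))^6 := pow_le_pow_left₀ (by positivity) h2 6
            _ = (t⁻¹)^6 * (Real.exp (t * |l|))^6 := by ring
            _ = (t⁻¹)^6 * Real.exp (6 * (t * |l|)) := by
                rw [← Real.exp_nat_mul]; norm_num
        calc (1+l^2)^3 * Real.exp (-b * r l)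
            ≤ ((t⁻¹)^6 * Real.exp (6 * (t * |l|))) * Real.exp (-(b/2) * |l|) := by
              apply mul_le_mul hpoly hexple (Real.exp_nonneg _) (by positivity)
          _ = (t⁻¹)^6 * Real.exp (6 * (t * |l|) + -(b/2) * |l|) := by
              rw [mul_assoc, Real.exp_add]
          _ ≤ (t⁻¹)^6 * 1 := by
              apply mul_le_mul_of_nonneg_left _ (by positivity)
              apply Real.exp_le_one_iff.mpr
              nlinarith [mul_le_mul_of_nonneg_right ht12 (abs_nonneg l)]
          _ = (t⁻¹)^6 := mul_one _
          _ ≤ _ := le_max_right _ _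
    calc (1+l^2)^2 * Real.exp (-b * r l)
        = ((1+l^2)^3 * Real.exp (-b * r l)) * (1+l^2)⁻¹ := by
          field_simp
      _ ≤ max ((1+L2)^3) ((t⁻¹)^6) * (1+l^2)⁻¹ :=
          mul_le_mul_of_nonneg_right key (by positivity)
  -- the integrand and its y-derivative
  set R : ℝ → ℂ := fun l => (γ l + Complex.I * α) / (γ l - Complex.I * α) with hRdef
  set e : ℝ → ℂ := fun l => Complex.exp (Complex.I * (l:ℂ) * ((x:ℂ) - (x₀:ℂ))) with hedef
  set F : ℝ → ℝ → ℂ := fun y l =>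
    (Complex.exp (γ l * ((y:ℂ) - (y₀:ℂ))) +
      Complex.exp (-γ l * ((y:ℂ) + (y₀:ℂ))) * R l) * e l / γ l with hFdef
  set F' : ℝ → ℝ → ℂ := fun y l =>
    (Complex.exp (γ l * ((y:ℂ) - (y₀:ℂ))) -
      Complex.exp (-γ l * ((y:ℂ) + (y₀:ℂ))) * R l) * e l with hF'def
  -- norms of the exponentials
  have hexp1 : ∀ (y : ℝ) (l : ℝ),
      ‖Complex.exp (γ l * ((y:ℂ) - (y₀:ℂ)))‖ = Real.exp (r l * (y - y₀)) := by
    intro y l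
    rw [Complex.norm_exp]
    congr 1
    simp [Complex.mul_re, hrdef]
  have hexp2 : ∀ (y : ℝ) (l : ℝ),
      ‖Complex.exp (-γ l * ((y:ℂ) + (y₀:ℂ)))‖ = Real.exp (-(r l) * (y + y₀)) := by
    intro y l
    rw [Complex.norm_exp]
    congr 1
    simp [Complex.mul_re, hrdef]
  have hexp3 : ∀ l : ℝ, ‖e l‖ = 1 := by
    intro l
    rw [hedef]
    simp only []
    rw [Complex.norm_exp]
    have : (Complex.I * (l:ℂ) * ((x:ℂ) - (x₀:ℂ))).re = 0 := by
      simp [Complex.mul_re, Complex.mul_im]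
    rw [this, Real.exp_zero]
  -- bound for the reflection coefficient
  have hR : ∀ l : ℝ, ‖R l‖ ≤ 1 + 2 * ‖α‖ / r l := by
    intro l
    rw [hRdef]
    simp only []
    rw [norm_div]
    have hden : r l ≤ ‖γ l - Complex.I * α‖ := by
      have h1 : (γ l - Complex.I * α).re = r l + α.im := by
        simp [Complex.sub_re, Complex.mul_re, hrdef]
      calc r l ≤ r l + α.im := by linarith
        _ = (γ l - Complex.I * α).re := h1.symm
        _ ≤ ‖γ l - Complex.I * α‖ := Complex.re_le_norm _
    have hnum : ‖γ l + Complex.I * α‖ ≤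
        ‖γ l - Complex.I * α‖ + 2 * ‖α‖ := by
      have h1 : γ l + Complex.I * α = (γ l - Complex.I * α) + (2 * Complex.I * α) := by ring
      rw [h1]
      calc ‖(γ l - Complex.I * α) + 2 * Complex.I * α‖
          ≤ ‖γ l - Complex.I * α‖ + ‖2 * Complex.I * α‖ :=
            norm_add_le _ _
        _ = ‖γ l - Complex.I * α‖ + 2 * ‖α‖ := by
            simp [map_mul]
    have hdpos : 0 < ‖γ l - Complex.I * α‖ := lt_of_lt_of_le (hγre l) hden
    calc ‖γ l + Complex.I * α‖ / ‖γ l - Complex.I * α‖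
        ≤ (‖γ l - Complex.I * α‖ + 2 * ‖α‖) /
            ‖γ l - Complex.I * α‖ :=
          by gcongr
      _ = 1 + 2 * ‖α‖ / ‖γ l - Complex.I * α‖ := by
          field_simp
      _ ≤ 1 + 2 * ‖α‖ / r l := by
          have := div_le_div_of_nonneg_left (by positivity : (0:ℝ) ≤ 2 * ‖α‖)
            (hγre l) hden
          linarith
  -- main pointwise bounds
  set K : ℝ := 1 + ‖k‖ with hKdef
  have hK1 : (1:ℝ) ≤ K := by rw [hKdef]; linarith [norm_nonneg k]
  set C₁ : ℝ := 2 + 2 * ‖α‖ * K / c with hC₁def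
  have hC₁0 : 0 < C₁ := by rw [hC₁def]; positivity
  have hfrac : ∀ l : ℝ, 2 + 2 * ‖α‖ / r l ≤ C₁ * (1 + l^2) := by
    intro l
    have h1 : 1 / r l ≤ s l / c := by
      rw [div_le_div_iff₀ (hγre l) hc]
      have := hrs l
      have := hs0 l
      calc 1 * c = c := one_mul c
        _ = (c / s l) * s l := by field_simp
        _ ≤ r l * s l := mul_le_mul_of_nonneg_right (hrs l) (le_of_lt (hs0 l))
        _ = s l * r l := mul_comm _ _
    have h2 : 2 * ‖α‖ / r l ≤ 2 * ‖α‖ * (K * (1 + l^2)) / c := by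
      have h3 : s l ≤ K * (1 + l^2) := hsle l
      have h4 : 2 * ‖α‖ / r l = 2 * ‖α‖ * (1 / r l) := by ring
      rw [h4]
      calc 2 * ‖α‖ * (1 / r l) ≤ 2 * ‖α‖ * (s l / c) :=
            mul_le_mul_of_nonneg_left h1 (by positivity)
        _ ≤ 2 * ‖α‖ * (K * (1 + l^2)) / c := by
            rw [mul_div_assoc]
            apply mul_le_mul_of_nonneg_left _ (by positivity)
            gcongr
    have h5 : (1:ℝ) ≤ 1 + l^2 := by nlinarith [sq_nonneg l]
    rw [hC₁def]
    have : 2 * ‖α‖ * (K * (1 + l^2)) / c = (2 * ‖α‖ * K / c) * (1 + l^2) := by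
      ring
    nlinarith [h2, this, mul_le_mul_of_nonneg_left h5 (by positivity : (0:ℝ) ≤ 2)]
  have hinv : ∀ l : ℝ, 1 / r l ≤ s l / c := by
    intro l
    rw [div_le_div_iff₀ (hγre l) hc]
    calc 1 * c = c := one_mul c
      _ = (c / s l) * s l := (div_mul_cancel₀ c (ne_of_gt (hs0 l))).symm
      _ ≤ r l * s l := mul_le_mul_of_nonneg_right (hrs l) (le_of_lt (hs0 l))
      _ = s l * r l := mul_comm _ _
  have hinvK : ∀ l : ℝ, 1 / r l ≤ K * (1 + l^2) / c := by
    intro l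
    calc 1 / r l ≤ s l / c := hinv l
      _ ≤ K * (1 + l^2) / c := by gcongr; exact hsle l
  -- uniform bound for ‖F' y l‖ on the ball
  have hbF' : ∀ l : ℝ, ∀ y ∈ Metric.ball (0:ℝ) (y₀/2),
      ‖F' y l‖ ≤ C₁ * (1 + l^2) * Real.exp (-(y₀/2) * r l) := by
    intro l y hy
    rw [Metric.mem_ball, Real.dist_eq, sub_zero] at hy
    have hrl := hγre l
    have hyy := abs_lt.mp hy
    have h1 : r l * (y - y₀) ≤ -(y₀/2) * r l := by nlinarith
    have h2 : -(r l) * (y + y₀) ≤ -(y₀/2) * r l := by nlinarith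
    have e1 := Real.exp_le_exp.mpr h1
    have e2 := Real.exp_le_exp.mpr h2
    have hprod : Real.exp (-(r l) * (y + y₀)) * ‖R l‖ ≤
        Real.exp (-(y₀/2) * r l) * (1 + 2 * ‖α‖ / r l) :=
      mul_le_mul e2 (hR l) (norm_nonneg _) (Real.exp_nonneg _)
    calc ‖F' y l‖
        = ‖Complex.exp (γ l * ((y:ℂ) - (y₀:ℂ))) -
            Complex.exp (-γ l * ((y:ℂ) + (y₀:ℂ))) * R l‖ * ‖e l‖ := by
          rw [hF'def]; simp only []; rw [norm_mul]
      _ = ‖Complex.exp (γ l * ((y:ℂ) - (y₀:ℂ))) -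
            Complex.exp (-γ l * ((y:ℂ) + (y₀:ℂ))) * R l‖ := by rw [hexp3 l, mul_one]
      _ ≤ ‖Complex.exp (γ l * ((y:ℂ) - (y₀:ℂ)))‖ +
            ‖Complex.exp (-γ l * ((y:ℂ) + (y₀:ℂ))) * R l‖ :=
          norm_sub_le _ _
      _ = Real.exp (r l * (y - y₀)) + Real.exp (-(r l) * (y + y₀)) * ‖R l‖ := by
          rw [norm_mul, hexp1, hexp2]
      _ ≤ Real.exp (-(y₀/2) * r l) + Real.exp (-(y₀/2) * r l) * (1 + 2 * ‖α‖ / r l) := by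
          linarith
      _ = Real.exp (-(y₀/2) * r l) * (2 + 2 * ‖α‖ / r l) := by ring
      _ ≤ Real.exp (-(y₀/2) * r l) * (C₁ * (1 + l^2)) :=
          mul_le_mul_of_nonneg_left (hfrac l) (Real.exp_nonneg _)
      _ = C₁ * (1 + l^2) * Real.exp (-(y₀/2) * r l) := by ring
  -- bound for ‖F 0 l‖
  have hbF0 : ∀ l : ℝ,
      ‖F 0 l‖ ≤ (C₁ * (K / c)) * ((1 + l^2)^2 * Real.exp (-(y₀/2) * r l)) := by
    intro l
    have hrl := hγre l
    have h0ball : (0:ℝ) ∈ Metric.ball (0:ℝ) (y₀/2) := Metric.mem_ball_self (by positivity)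
    have hnum : ‖Complex.exp (γ l * (((0:ℝ):ℂ) - (y₀:ℂ))) +
        Complex.exp (-γ l * (((0:ℝ):ℂ) + (y₀:ℂ))) * R l‖
        ≤ Real.exp (-(y₀/2) * r l) * (2 + 2 * ‖α‖ / r l) := by
      have h1 : r l * ((0:ℝ) - y₀) ≤ -(y₀/2) * r l := by nlinarith
      have h2 : -(r l) * ((0:ℝ) + y₀) ≤ -(y₀/2) * r l := by nlinarith
      have e1 := Real.exp_le_exp.mpr h1
      have e2 := Real.exp_le_exp.mpr h2
      have hprod : Real.exp (-(r l) * ((0:ℝ) + y₀)) * ‖R l‖ ≤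
          Real.exp (-(y₀/2) * r l) * (1 + 2 * ‖α‖ / r l) :=
        mul_le_mul e2 (hR l) (norm_nonneg _) (Real.exp_nonneg _)
      calc ‖Complex.exp (γ l * (((0:ℝ):ℂ) - (y₀:ℂ))) +
            Complex.exp (-γ l * (((0:ℝ):ℂ) + (y₀:ℂ))) * R l‖
          ≤ ‖Complex.exp (γ l * (((0:ℝ):ℂ) - (y₀:ℂ)))‖ +
            ‖Complex.exp (-γ l * (((0:ℝ):ℂ) + (y₀:ℂ))) * R l‖ :=
            norm_add_le _ _
        _ = Real.exp (r l * ((0:ℝ) - y₀)) + Real.exp (-(r l) * ((0:ℝ) + y₀)) *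
              ‖R l‖ := by rw [norm_mul, hexp1, hexp2]
        _ ≤ Real.exp (-(y₀/2) * r l) + Real.exp (-(y₀/2) * r l) *
              (1 + 2 * ‖α‖ / r l) := by linarith
        _ = Real.exp (-(y₀/2) * r l) * (2 + 2 * ‖α‖ / r l) := by ring
    have hγge : r l ≤ ‖γ l‖ := Complex.re_le_norm _
    calc ‖F 0 l‖
        = ‖Complex.exp (γ l * (((0:ℝ):ℂ) - (y₀:ℂ))) +
            Complex.exp (-γ l * (((0:ℝ):ℂ) + (y₀:ℂ))) * R l‖ * ‖e l‖ /
            ‖γ l‖ := by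
          rw [hFdef]; simp only []; rw [norm_div, norm_mul]
      _ = ‖Complex.exp (γ l * (((0:ℝ):ℂ) - (y₀:ℂ))) +
            Complex.exp (-γ l * (((0:ℝ):ℂ) + (y₀:ℂ))) * R l‖ / ‖γ l‖ := by
          rw [hexp3 l, mul_one]
      _ ≤ (Real.exp (-(y₀/2) * r l) * (2 + 2 * ‖α‖ / r l)) / r l :=
          div_le_div₀ (by positivity) hnum (hγre l) hγge
      _ = Real.exp (-(y₀/2) * r l) * ((2 + 2 * ‖α‖ / r l) * (1 / r l)) := by
          ring
      _ ≤ Real.exp (-(y₀/2) * r l) * ((C₁ * (1 + l^2)) * (K * (1 + l^2) / c)) := by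
          apply mul_le_mul_of_nonneg_left _ (Real.exp_nonneg _)
          apply mul_le_mul (hfrac l) (hinvK l) (by positivity) (by positivity)
      _ = (C₁ * (K / c)) * ((1 + l^2)^2 * Real.exp (-(y₀/2) * r l)) := by ring
  -- continuity in l
  have hcont : ∀ y : ℝ, Continuous (F y) := by
    intro y
    rw [hFdef]
    have hcR : Continuous R := by
      rw [hRdef]
      exact (hγcont.add continuous_const).div (hγcont.sub continuous_const) hγiα
    have hce : Continuous e := by
      rw [hedef]
      exact ((continuous_const.mul Complex.continuous_ofReal).mul continuous_const).cexp
    have hc1 : Continuous fun l : ℝ => Complex.exp (γ l * ((y:ℂ) - (y₀:ℂ))) :=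
      (hγcont.mul continuous_const).cexp
    have hc2 : Continuous fun l : ℝ => Complex.exp (-γ l * ((y:ℂ) + (y₀:ℂ))) :=
      (hγcont.neg.mul continuous_const).cexp
    exact ((hc1.add (hc2.mul hcR)).mul hce).div hγcont hγ0
  have hcontF' : Continuous (F' 0) := by
    rw [hF'def]
    have hcR : Continuous R := by
      rw [hRdef]
      exact (hγcont.add continuous_const).div (hγcont.sub continuous_const) hγiα
    have hce : Continuous e := by
      rw [hedef]
      exact ((continuous_const.mul Complex.continuous_ofReal).mul continuous_const).cexp
    have hc1 : Continuous fun l : ℝ => Complex.exp (γ l * ((((0:ℝ)):ℂ) - (y₀:ℂ))) :=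
      (hγcont.mul continuous_const).cexp
    have hc2 : Continuous fun l : ℝ => Complex.exp (-γ l * ((((0:ℝ)):ℂ) + (y₀:ℂ))) :=
      (hγcont.neg.mul continuous_const).cexp
    exact (hc1.sub (hc2.mul hcR)).mul hce
  -- integrability of F 0
  have hFint : Integrable (F 0) := by
    apply Integrable.mono' ((integrable_inv_one_add_sq.const_mul ((C₁ * (K / c)) * C)))
      (hcont 0).aestronglyMeasurable
    apply Filter.Eventually.of_forall
    intro l
    calc ‖F 0 l‖ ≤ (C₁ * (K / c)) * ((1 + l^2)^2 * Real.exp (-(y₀/2) * r l)) := hbF0 l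
      _ ≤ (C₁ * (K / c)) * (C * (1 + l^2)⁻¹) := by
          apply mul_le_mul_of_nonneg_left (hC l) (by positivity)
      _ = (C₁ * (K / c)) * C * (1 + l^2)⁻¹ := by ring
  -- the derivative of the integrand
  have hdiff : ∀ l : ℝ, ∀ y : ℝ, HasDerivAt (fun y' : ℝ => F y' l) (F' y l) y := by
    intro l y
    have hid : HasDerivAt (fun y' : ℝ => ((y':ℝ):ℂ)) 1 y := by
      simpa using (hasDerivAt_id y).ofReal_comp
    have h1 : HasDerivAt (fun y' : ℝ => γ l * ((y':ℂ) - (y₀:ℂ))) (γ l * 1) y :=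
      (hid.sub_const _).const_mul _
    have h2 : HasDerivAt (fun y' : ℝ => -γ l * ((y':ℂ) + (y₀:ℂ))) (-γ l * 1) y :=
      (hid.add_const _).const_mul _
    have h5 := ((h1.cexp.add (h2.cexp.mul_const (R l))).mul_const (e l)).div_const (γ l)
    simp only [hFdef, hF'def]
    refine h5.congr_deriv ?_
    rw [div_eq_iff (hγ0 l)]
    ring
  -- differentiate under the integral
  obtain ⟨hF'int, hderiv⟩ := hasDerivAt_integral_of_dominated_loc_of_deriv_le
    (F := F) (F' := F') (x₀ := (0:ℝ)) (s := Metric.ball (0:ℝ) (y₀/2))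
    (bound := fun l => C₁ * C * (1 + l^2)⁻¹) (μ := volume)
    (Metric.ball_mem_nhds _ (by positivity))
    (Filter.Eventually.of_forall fun y => (hcont y).aestronglyMeasurable)
    hFint
    hcontF'.aestronglyMeasurable
    (Filter.Eventually.of_forall fun l y hy => by
      calc ‖F' y l‖ ≤ C₁ * (1 + l^2) * Real.exp (-(y₀/2) * r l) := hbF' l y hy
        _ = C₁ * ((1 + l^2) * Real.exp (-(y₀/2) * r l)) := by ring
        _ ≤ C₁ * ((1 + l^2)^2 * Real.exp (-(y₀/2) * r l)) := by
            have h5 : (1:ℝ) ≤ 1 + l^2 := by nlinarith [sq_nonneg l]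
            have hmono : (1 + l^2) * Real.exp (-(y₀/2) * r l) ≤
                (1 + l^2)^2 * Real.exp (-(y₀/2) * r l) := by
              apply mul_le_mul_of_nonneg_right _ (Real.exp_nonneg _)
              nlinarith
            exact mul_le_mul_of_nonneg_left hmono (le_of_lt hC₁0)
        _ ≤ C₁ * (C * (1 + l^2)⁻¹) := mul_le_mul_of_nonneg_left (hC l) (le_of_lt hC₁0)
        _ = C₁ * C * (1 + l^2)⁻¹ := by ring)
    ((integrable_inv_one_add_sq.const_mul (C₁ * C)))
    (Filter.Eventually.of_forall fun l y _ => hdiff l y)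
  -- package the derivative
  set d : ℂ := (1/(4*(Real.pi:ℂ))) * ∫ l, F' 0 l with hddef
  have hd : HasDerivAt (fun y : ℝ => (1/(4*(Real.pi:ℂ))) * ∫ l, F y l) d 0 :=
    hderiv.const_mul _
  refine ⟨d, ?_, ?_⟩
  · apply (hd.hasDerivWithinAt (s := Set.Ici 0)).congr_of_eventuallyEq
    · have hIio : Set.Iio y₀ ∈ nhdsWithin (0:ℝ) (Set.Ici 0) :=
        mem_nhdsWithin_of_mem_nhds (Iio_mem_nhds hy₀)
      filter_upwards [hIio, self_mem_nhdsWithin] with y hy1 hy2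
      rw [hg x y hy2 hy1]
    · rw [hg x 0 le_rfl hy₀]
  · have hzero : ∀ l : ℝ, F' 0 l + Complex.I * α * F 0 l = 0 := by
      intro l
      simp only [hFdef, hF'def, hRdef, Complex.ofReal_zero]
      rw [show γ l * ((0:ℂ) - (y₀:ℂ)) = -(γ l * (y₀:ℂ)) by ring,
        show -γ l * ((0:ℂ) + (y₀:ℂ)) = -(γ l * (y₀:ℂ)) by ring]
      field_simp [hγ0 l, hγiα l]
      ring
    have h1 : ∫ l : ℝ, (F' 0 l + Complex.I * α * F 0 l) =
        (∫ l : ℝ, F' 0 l) + ∫ l : ℝ, Complex.I * α * F 0 l :=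
      integral_add hF'int (hFint.const_mul _)
    have h2 : ∫ l : ℝ, Complex.I * α * F 0 l = Complex.I * α * ∫ l : ℝ, F 0 l :=
      integral_const_mul _ _
    have h3 : ∫ l : ℝ, (F' 0 l + Complex.I * α * F 0 l) = 0 := by
      simp only [hzero]; exact integral_zero _ _
    rw [h1, h2] at h3
    have hg0 : g x 0 = (1/(4*(Real.pi:ℂ))) * ∫ l : ℝ, F 0 l := hg x 0 le_rfl hy₀
    rw [hg0, hddef]
    linear_combination (-(1:ℂ)/(4*(Real.pi:ℂ))) * h3
end

section
/- Let k ∈ ℂ with Re k > 0 and Im k > 0, let α ∈ ℂ with Im α ≥ 0, let C > 0, and fix x, x₀ ∈ ℝ and y, y₀ ≥ 0. Then ∫_C^∞ [ (1/4π)·∫_ℝ e^{−γ(λ)(y+y₀+η)}·e^{iλ(x−x₀)}/γ(λ) dλ ]·e^{iαη} dη = (1/4π)·∫_ℝ e^{−γ(λ)(y+y₀)}·(e^{−(γ(λ)−iα)C}/(γ(λ)−iα))·e^{iλ(x−x₀)}/γ(λ) dλ, with all integrals converging absolutely. -/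
open MeasureTheory

section Helpers

lemma ffi_sqrt_re_pos {z : ℂ} (hz : z.im ≠ 0) : 0 < (z ^ ((1:ℂ)/2)).re := by
  have hz0 : z ≠ 0 := fun h => hz (by simp [h])
  rw [Complex.cpow_def_of_ne_zero hz0, Complex.exp_re]
  have harg : |z.arg| < Real.pi := by
    rcases (Complex.arg_le_pi z).lt_or_eq with h | h
    · exact abs_lt.mpr ⟨Complex.neg_pi_lt_arg z, h⟩
    · exact absurd ((Complex.arg_eq_pi_iff).mp h).2 hz
  have him : (Complex.log z * (1/2)).im = z.arg / 2 := by
    simp [Complex.mul_im, Complex.log_im]; ring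
  have hcos : 0 < Real.cos ((Complex.log z * (1/2)).im) := by
    rw [him]
    apply Real.cos_pos_of_mem_Ioo
    constructor
    · nlinarith [abs_lt.mp harg, Real.pi_pos]
    · nlinarith [abs_lt.mp harg, Real.pi_pos]
  positivity

lemma ffi_sqrt_mul_self {z : ℂ} (hz0 : z ≠ 0) : z ^ ((1:ℂ)/2) * z ^ ((1:ℂ)/2) = z := by
  rw [← Complex.cpow_add _ _ hz0]; norm_num

lemma ffi_sqrt_re_sq {z : ℂ} (hz : z.im ≠ 0) :
    ((z ^ ((1:ℂ)/2)).re) ^ 2 = (‖z‖ + z.re) / 2 := by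
  have hz0 : z ≠ 0 := fun h => hz (by simp [h])
  set s := z ^ ((1:ℂ)/2) with hs
  have h2 : s * s = z := ffi_sqrt_mul_self hz0
  have hre : s.re ^ 2 - s.im ^ 2 = z.re := by
    rw [← h2]; simp [Complex.mul_re]; ring
  have habs : s.re ^ 2 + s.im ^ 2 = ‖z‖ := by
    have h3 : ‖s‖ * ‖s‖ = ‖z‖ := by rw [← norm_mul, h2]
    have h4 := Complex.sq_norm s
    rw [Complex.normSq_apply] at h4
    nlinarith [h3, h4]
  nlinarith [hre, habs]

lemma ffi_sqrt_abs_sq {z : ℂ} (hz0 : z ≠ 0) :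
    ‖z ^ ((1:ℂ)/2)‖ ^ 2 = ‖z‖ := by
  rw [sq, ← norm_mul]; congr 1; exact ffi_sqrt_mul_self hz0

/-- integrability of `exp (-b * |x|)` on `ℝ`. -/
lemma ffi_integrable_exp_neg_mul_abs {b : ℝ} (hb : 0 < b) :
    Integrable (fun x : ℝ => Real.exp (-b * |x|)) := by
  have h1 : IntegrableOn (fun x : ℝ => Real.exp (-b * |x|)) (Set.Ioi 0) := by
    refine (exp_neg_integrableOn_Ioi 0 hb).congr_fun ?_ measurableSet_Ioi
    intro x hx; simp [abs_of_pos (Set.mem_Ioi.mp hx)]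
  have h2 : IntegrableOn (fun x : ℝ => Real.exp (-b * |x|)) (Set.Iic 0) := by
    rw [IntegrableOn, ← Measure.map_neg_eq_self (volume : Measure ℝ)]
    have m : MeasurableEmbedding fun x : ℝ => -x :=
      (Homeomorph.neg ℝ).measurableEmbedding
    rw [Measure.restrict_map m.measurable (by exact measurableSet_Iic), m.integrable_map_iff]
    simp only [Function.comp_def, abs_neg]
    have : (fun x : ℝ => -x) ⁻¹' Set.Iic 0 = Set.Ici 0 := by
      ext t; simp
    rw [this]
    exact h1.congr_set_ae (MeasureTheory.Ioi_ae_eq_Ici (a := (0:ℝ))).symm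
  have huniv : Set.Iic (0:ℝ) ∪ Set.Ioi 0 = Set.univ := Set.Iic_union_Ioi
  rw [← integrableOn_univ, ← huniv]
  exact h2.union h1

/-- `∫ η in Ioi C, exp (-(c*η)) = exp (-(c*C))/c` for `0 < c.re`. -/
lemma ffi_integral_exp_Ioi {c : ℂ} (hc : 0 < c.re) (C : ℝ) :
    (∫ η in Set.Ioi C, Complex.exp (-(c * η))) = Complex.exp (-(c * C)) / c ∧
      IntegrableOn (fun η : ℝ => Complex.exp (-(c * η))) (Set.Ioi C) := by
  have hc0 : c ≠ 0 := fun h => by simp [h] at hc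
  have hint : IntegrableOn (fun η : ℝ => Complex.exp (-(c * η))) (Set.Ioi C) := by
    refine (Integrable.mono' ((exp_neg_integrableOn_Ioi C hc).norm) ?_ ?_)
    · refine Continuous.aestronglyMeasurable ?_
      exact ((continuous_const.mul Complex.continuous_ofReal).neg.cexp : Continuous fun η : ℝ => Complex.exp (-(c * η)))
    · filter_upwards with η
      simp only [Complex.norm_exp, Complex.neg_re, norm_norm,
        Real.norm_eq_abs, abs_of_pos (Real.exp_pos _)]
      simp [Complex.mul_re]
  have hderiv : ∀ η ∈ Set.Ici C,
      HasDerivAt (fun η : ℝ => -Complex.exp (-(c * η)) / c) (Complex.exp (-(c * η))) η := by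
    intro η _
    have h0 : HasDerivAt (fun η : ℝ => (η : ℂ)) 1 η := Complex.ofRealCLM.hasDerivAt
    have h1 : HasDerivAt (fun η : ℝ => -(c * (η:ℂ))) (-c) η := by
      have := (h0.const_mul c).neg; rw [mul_one] at this; exact this
    have h2 := h1.cexp
    have h3 := (h2.neg).div_const c
    rw [mul_neg, neg_neg, mul_div_assoc, div_self hc0, mul_one] at h3
    exact h3
  have htend : Filter.Tendsto (fun η : ℝ => -Complex.exp (-(c * η)) / c)
      Filter.atTop (nhds 0) := by
    rw [show (0:ℂ) = -0/c by simp]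
    apply Filter.Tendsto.div_const
    apply Filter.Tendsto.neg
    rw [tendsto_zero_iff_norm_tendsto_zero]
    have : ∀ η : ℝ, ‖Complex.exp (-(c * η))‖ = Real.exp (-c.re * η) := by
      intro η
      simp only [Complex.norm_exp, Complex.neg_re]
      congr 1
      simp [Complex.mul_re]
    simp only [this]
    exact Real.tendsto_exp_atBot.comp
      (Filter.Tendsto.const_mul_atTop_of_neg (neg_lt_zero.mpr hc) Filter.tendsto_id)
  have := integral_Ioi_of_hasDerivAt_of_tendsto' hderiv hint htend
  refine ⟨?_, hint⟩
  rw [this]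
  field_simp
  ring

end Helpers

set_option maxHeartbeats 1000000 in
/-- The far-field portion (image depths `η ≥ C`) of the real-image
representation of the scattered field equals the rapidly converging
Sommerfeld-like integral of the hybrid representation:
`∫_C^∞ [(1/4π)·∫_ℝ e^{−γ(λ)(y+y₀+η)}·e^{iλ(x−x₀)}/γ(λ) dλ]·e^{iαη} dη
  = (1/4π)·∫_ℝ e^{−γ(λ)(y+y₀)}·(e^{−(γ(λ)−iα)C}/(γ(λ)−iα))·e^{iλ(x−x₀)}/γ(λ) dλ`,
with all integrals converging absolutely. -/
theorem farfield_image_integral_eq_sommerfeld_tail (k α : ℂ)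
    (hk_re : 0 < k.re) (hk_im : 0 < k.im) (hα : 0 ≤ α.im)
    (C : ℝ) (hC : 0 < C)
    (x x₀ y y₀ : ℝ) (hy : 0 ≤ y) (hy₀ : 0 ≤ y₀)
    (γ : ℝ → ℂ) (hγ : ∀ l : ℝ, γ l = ((l : ℂ) ^ 2 - k ^ 2) ^ ((1 : ℂ) / 2)) :
    (∀ η : ℝ, C ≤ η → Integrable (fun l : ℝ =>
      Complex.exp (-γ l * (y + y₀ + η)) *
        Complex.exp (Complex.I * l * (x - x₀)) / γ l)) ∧
    IntegrableOn (fun η : ℝ =>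
      ((1 / (4 * (Real.pi : ℂ))) * ∫ l : ℝ,
          Complex.exp (-γ l * (y + y₀ + η)) *
            Complex.exp (Complex.I * l * (x - x₀)) / γ l) *
        Complex.exp (Complex.I * α * η)) (Set.Ioi C) ∧
    Integrable (fun l : ℝ =>
      Complex.exp (-γ l * (y + y₀)) *
        (Complex.exp (-(γ l - Complex.I * α) * C) / (γ l - Complex.I * α)) *
        Complex.exp (Complex.I * l * (x - x₀)) / γ l) ∧
    ∫ η in Set.Ioi C,
        ((1 / (4 * (Real.pi : ℂ))) * ∫ l : ℝ,
            Complex.exp (-γ l * (y + y₀ + η)) *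
              Complex.exp (Complex.I * l * (x - x₀)) / γ l) *
          Complex.exp (Complex.I * α * η) =
      (1 / (4 * (Real.pi : ℂ))) * ∫ l : ℝ,
          Complex.exp (-γ l * (y + y₀)) *
            (Complex.exp (-(γ l - Complex.I * α) * C) / (γ l - Complex.I * α)) *
            Complex.exp (Complex.I * l * (x - x₀)) / γ l := by
  -- basic facts about γ
  have hwim : ∀ l : ℝ, ((l : ℂ) ^ 2 - k ^ 2).im = -(2 * k.re * k.im) := by
    intro l
    simp [Complex.sub_im, sq, Complex.mul_im]
    ring
  have hwim_ne : ∀ l : ℝ, ((l : ℂ) ^ 2 - k ^ 2).im ≠ 0 := by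
    intro l; rw [hwim l]
    have : 0 < 2 * k.re * k.im := by positivity
    linarith
  have hw0 : ∀ l : ℝ, ((l : ℂ) ^ 2 - k ^ 2) ≠ 0 := by
    intro l h; exact hwim_ne l (by simp [h])
  have hγre : ∀ l : ℝ, 0 < (γ l).re := by
    intro l; rw [hγ l]; exact ffi_sqrt_re_pos (hwim_ne l)
  have hγ0 : ∀ l : ℝ, γ l ≠ 0 := by
    intro l h
    have := hγre l; rw [h] at this; simp at this
  -- lower bound on |γ|
  set m : ℝ := Real.sqrt (2 * k.re * k.im) with hm
  have hm_pos : 0 < m := Real.sqrt_pos.mpr (by positivity)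
  have hγabs : ∀ l : ℝ, m ≤ ‖γ l‖ := by
    intro l
    have h1 : ‖γ l‖ ^ 2 = ‖(l : ℂ) ^ 2 - k ^ 2‖ := by
      rw [hγ l]; exact ffi_sqrt_abs_sq (hw0 l)
    have h2 : 2 * k.re * k.im ≤ ‖(l : ℂ) ^ 2 - k ^ 2‖ := by
      have := Complex.abs_im_le_norm ((l : ℂ) ^ 2 - k ^ 2)
      rw [hwim l] at this
      rw [abs_neg, abs_of_pos (by positivity)] at this
      exact this
    have h3 : m ^ 2 ≤ ‖γ l‖ ^ 2 := by
      rw [hm, Real.sq_sqrt (by positivity)]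
      rw [h1]; exact h2
    nlinarith [norm_nonneg (γ l), hm_pos]
  -- continuity of γ
  have hγcont : Continuous γ := by
    have : Continuous fun l : ℝ => ((l : ℂ) ^ 2 - k ^ 2) ^ ((1 : ℂ) / 2) := by
      apply Continuous.cpow
      · exact (Complex.continuous_ofReal.pow 2).sub continuous_const
      · exact continuous_const
      · intro l
        exact Complex.mem_slitPlane_iff.mpr (Or.inr (hwim_ne l))
    exact this.congr fun l => (hγ l).symm
  -- uniform linear lower bound on re γ
  obtain ⟨a, ha_pos, hlow⟩ : ∃ a : ℝ, 0 < a ∧ ∀ l : ℝ, a * (1 + |l|) ≤ (γ l).re := by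
    set M : ℝ := Real.sqrt (2 * k.re ^ 2 + 2) with hM
    have hM1 : 1 ≤ M := by
      rw [hM]
      rw [show (1:ℝ) = Real.sqrt 1 by simp]
      apply Real.sqrt_le_sqrt; nlinarith [sq_nonneg k.re]
    obtain ⟨l₀, hl₀, hmin⟩ := (isCompact_Icc (a := -M) (b := M)).exists_isMinOn
      ⟨0, by constructor <;> linarith⟩ ((Complex.continuous_re.comp hγcont).continuousOn)
    set m₀ : ℝ := (γ l₀).re with hm₀
    have hm₀_pos : 0 < m₀ := hγre l₀
    refine ⟨min (m₀ / (1 + M)) (1/4), lt_min (by positivity) (by norm_num), ?_⟩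
    intro l
    rcases le_or_gt (|l|) M with hcase | hcase
    · have h1 : (γ l₀).re ≤ (γ l).re := hmin (abs_le.mp hcase)
      have h2 : min (m₀ / (1 + M)) (1/4) * (1 + |l|) ≤ (m₀ / (1 + M)) * (1 + M) := by
        apply mul_le_mul (min_le_left _ _) (by linarith) (by positivity) (by positivity)
      calc min (m₀ / (1 + M)) (1/4) * (1 + |l|) ≤ (m₀ / (1 + M)) * (1 + M) := h2
        _ = m₀ := by field_simp
        _ ≤ (γ l).re := h1
    · -- large |l|
      have hl2 : 2 * k.re ^ 2 + 2 ≤ l ^ 2 := by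
        have h0 : M ^ 2 = 2 * k.re ^ 2 + 2 := Real.sq_sqrt (by positivity)
        have := sq_abs l
        nlinarith [hcase.le, hM1]
      have hwre : l ^ 2 / 2 ≤ ((l : ℂ) ^ 2 - k ^ 2).re := by
        have : ((l : ℂ) ^ 2 - k ^ 2).re = l ^ 2 - (k.re ^ 2 - k.im ^ 2) := by
          simp [Complex.sub_re, sq, Complex.mul_re]
        rw [this]
        nlinarith [sq_nonneg k.im]
      have hγsq : ((γ l).re) ^ 2 = (‖(l:ℂ)^2 - k^2‖ + ((l:ℂ)^2 - k^2).re) / 2 := by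
        rw [hγ l]; exact ffi_sqrt_re_sq (hwim_ne l)
      have hge : l ^ 2 / 2 ≤ ((γ l).re) ^ 2 := by
        rw [hγsq]
        have := Complex.re_le_norm ((l:ℂ)^2 - k^2)
        linarith [hwre]
      have hre_pos := hγre l
      have habs2 : |l| / 2 ≤ (γ l).re := by
        nlinarith [sq_abs l, hre_pos, hge, abs_nonneg l]
      have h1l : 1 + |l| ≤ 2 * |l| := by linarith [hM1, hcase]
      calc min (m₀ / (1 + M)) (1/4) * (1 + |l|) ≤ (1/4) * (2 * |l|) := by
            apply mul_le_mul (min_le_right _ _) h1l (by positivity) (by norm_num)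
        _ = |l| / 2 := by ring
        _ ≤ (γ l).re := habs2
  have ham : 0 < a * C := by positivity
  -- norm computations
  have hre1 : ∀ (l η : ℝ), (-γ l * ((y:ℂ) + (y₀:ℂ) + (η:ℂ))).re = -(γ l).re * (y + y₀ + η) := by
    intro l η
    have h : ((y:ℂ) + (y₀:ℂ) + (η:ℂ)) = ((y + y₀ + η : ℝ) : ℂ) := by push_cast; ring
    rw [h]; simp
  have hnorm1 : ∀ l η : ℝ, ‖Complex.exp (-γ l * ((y:ℂ) + (y₀:ℂ) + (η:ℂ))) *
      Complex.exp (Complex.I * l * ((x:ℂ) - (x₀:ℂ))) / γ l‖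
      = Real.exp (-(γ l).re * (y + y₀ + η)) / ‖γ l‖ := by
    intro l η
    rw [norm_div, norm_mul]
    simp only [Complex.norm_exp, hre1]
    have h2 : (Complex.I * (l:ℂ) * ((x:ℂ) - (x₀:ℂ))).re = 0 := by simp
    rw [h2, Real.exp_zero, mul_one]
  -- the dominating bound for the inner integrand
  have hbound : ∀ l η : ℝ, C ≤ η →
      ‖Complex.exp (-γ l * ((y:ℂ) + (y₀:ℂ) + (η:ℂ))) *
        Complex.exp (Complex.I * l * ((x:ℂ) - (x₀:ℂ))) / γ l‖
      ≤ (Real.exp (-a * η) / m) * Real.exp (-(a * C) * |l|) := by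
    intro l η hη
    have hη0 : 0 < η := lt_of_lt_of_le hC hη
    rw [hnorm1 l η]
    have hexp : -(γ l).re * (y + y₀ + η) ≤ -a * η + -(a * C) * |l| := by
      have h1 : a * (1 + |l|) ≤ (γ l).re := hlow l
      have h2 : (γ l).re * η ≤ (γ l).re * (y + y₀ + η) := by
        have := (hγre l).le
        nlinarith
      have h3 : a * η + a * C * |l| ≤ (γ l).re * η := by
        have h4 : a * (1 + |l|) * η ≤ (γ l).re * η := by
          apply mul_le_mul_of_nonneg_right h1 hη0.le
        have h5 : a * C * |l| ≤ a * η * |l| := by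
          have : a * C ≤ a * η := by nlinarith
          exact mul_le_mul_of_nonneg_right this (abs_nonneg l)
        nlinarith
      linarith
    calc Real.exp (-(γ l).re * (y + y₀ + η)) / ‖γ l‖
        ≤ Real.exp (-a * η + -(a * C) * |l|) / m := by
          apply div_le_div₀ (Real.exp_pos _).le (Real.exp_le_exp.mpr hexp) hm_pos (hγabs l)
      _ = (Real.exp (-a * η) / m) * Real.exp (-(a * C) * |l|) := by
          rw [Real.exp_add]; ring
  -- continuity of the inner integrand in l (for fixed η)
  have hcont_inner : ∀ η : ℝ, Continuous (fun l : ℝ =>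
      Complex.exp (-γ l * ((y:ℂ) + (y₀:ℂ) + (η:ℂ))) *
        Complex.exp (Complex.I * l * ((x:ℂ) - (x₀:ℂ))) / γ l) := by
    intro η
    apply Continuous.div _ hγcont hγ0
    exact ((hγcont.neg.mul continuous_const).cexp).mul
      (((continuous_const.mul Complex.continuous_ofReal).mul continuous_const).cexp)
  -- claim 1
  have claim1 : ∀ η : ℝ, C ≤ η → Integrable (fun l : ℝ =>
      Complex.exp (-γ l * ((y:ℂ) + (y₀:ℂ) + (η:ℂ))) *
        Complex.exp (Complex.I * l * ((x:ℂ) - (x₀:ℂ))) / γ l) := by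
    intro η hη
    refine Integrable.mono' ((ffi_integrable_exp_neg_mul_abs ham).const_mul
      (Real.exp (-a * η) / m)) ((hcont_inner η).aestronglyMeasurable) ?_
    filter_upwards with l
    exact hbound l η hη
  -- the joint integrand
  set F : ℝ → ℝ → ℂ := fun η l =>
    (Complex.exp (-γ l * ((y:ℂ) + (y₀:ℂ) + (η:ℂ))) *
      Complex.exp (Complex.I * l * ((x:ℂ) - (x₀:ℂ))) / γ l) *
      Complex.exp (Complex.I * α * (η:ℂ)) with hF
  have hnormα : ∀ η : ℝ, 0 ≤ η → ‖Complex.exp (Complex.I * α * (η:ℂ))‖ ≤ 1 := by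
    intro η hη
    rw [Complex.norm_exp]
    have : (Complex.I * α * (η:ℂ)).re = -α.im * η := by simp [Complex.mul_re]
    rw [this]
    rw [Real.exp_le_one_iff]
    nlinarith
  -- product integrability
  have hFint : Integrable (Function.uncurry F)
      ((volume.restrict (Set.Ioi C)).prod volume) := by
    constructor
    · apply Continuous.aestronglyMeasurable
      apply Continuous.mul
      · apply Continuous.div _ (hγcont.comp continuous_snd) (fun p => hγ0 p.2)
        apply Continuous.mul
        · apply Continuous.cexp
          exact ((hγcont.comp continuous_snd).neg.mul
            (continuous_const.add (Complex.continuous_ofReal.comp continuous_fst)))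
        · apply Continuous.cexp
          exact ((continuous_const.mul
            (Complex.continuous_ofReal.comp continuous_snd)).mul continuous_const)
      · exact (continuous_const.mul
          (Complex.continuous_ofReal.comp continuous_fst)).cexp
    · have hGint : Integrable (fun p : ℝ × ℝ =>
          (Real.exp (-a * p.1) / m) * Real.exp (-(a * C) * |p.2|))
          ((volume.restrict (Set.Ioi C)).prod volume) :=
        Integrable.mul_prod ((exp_neg_integrableOn_Ioi C ha_pos).div_const m)
          (ffi_integrable_exp_neg_mul_abs ham)
      have hae : ∀ᵐ p : ℝ × ℝ ∂((volume.restrict (Set.Ioi C)).prod volume),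
          p.1 ∈ Set.Ioi C := by
        rw [Measure.restrict_prod_eq_prod_univ]
        filter_upwards [ae_restrict_mem ((measurableSet_Ioi).prod MeasurableSet.univ)]
          with p hp using hp.1
      apply HasFiniteIntegral.mono' hGint.2
      filter_upwards [hae] with p hp
      have hC' : C ≤ p.1 := (Set.mem_Ioi.mp hp).le
      calc ‖Function.uncurry F p‖
          ≤ ‖Complex.exp (-γ p.2 * ((y:ℂ) + (y₀:ℂ) + (p.1:ℂ))) *
              Complex.exp (Complex.I * p.2 * ((x:ℂ) - (x₀:ℂ))) / γ p.2‖ * 1 := by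
            rw [Function.uncurry, hF]
            simp only [norm_mul]
            exact mul_le_mul_of_nonneg_left (hnormα p.1 (le_trans hC.le hC'))
              (norm_nonneg _)
        _ ≤ (Real.exp (-a * p.1) / m) * Real.exp (-(a * C) * |p.2|) := by
            rw [mul_one]
            exact hbound p.2 p.1 hC'
  have hmarg : Integrable (fun η : ℝ => ∫ l : ℝ, F η l)
      (volume.restrict (Set.Ioi C)) := hFint.integral_prod_left
  -- pointwise identity to pull the constant and the η-exponential inside
  have hpt : ∀ η : ℝ,
      ((1 / (4 * (Real.pi : ℂ))) * ∫ l : ℝ,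
          Complex.exp (-γ l * ((y:ℂ) + (y₀:ℂ) + (η:ℂ))) *
            Complex.exp (Complex.I * l * ((x:ℂ) - (x₀:ℂ))) / γ l) *
        Complex.exp (Complex.I * α * (η:ℂ))
      = (1 / (4 * (Real.pi : ℂ))) * ∫ l : ℝ, F η l := by
    intro η
    simp only [hF]
    rw [mul_assoc]
    congr 1
    exact (integral_mul_const _ _).symm
  -- claim 2
  have claim2 : IntegrableOn (fun η : ℝ =>
      ((1 / (4 * (Real.pi : ℂ))) * ∫ l : ℝ,
          Complex.exp (-γ l * ((y:ℂ) + (y₀:ℂ) + (η:ℂ))) *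
            Complex.exp (Complex.I * l * ((x:ℂ) - (x₀:ℂ))) / γ l) *
        Complex.exp (Complex.I * α * (η:ℂ))) (Set.Ioi C) := by
    have := hmarg.const_mul (1 / (4 * (Real.pi : ℂ)))
    exact this.congr (Filter.Eventually.of_forall fun η => (hpt η).symm)
  -- facts about γ - I α
  have hccre : ∀ l : ℝ, 0 < (γ l - Complex.I * α).re := by
    intro l
    have h : (γ l - Complex.I * α).re = (γ l).re + α.im := by simp
    rw [h]; linarith [hγre l]
  have hcc0 : ∀ l : ℝ, γ l - Complex.I * α ≠ 0 := by
    intro l h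
    have := hccre l; rw [h] at this; simp at this
  have hccabs : ∀ l : ℝ, a ≤ ‖γ l - Complex.I * α‖ := by
    intro l
    refine le_trans ?_ (Complex.re_le_norm _)
    have h : (γ l - Complex.I * α).re = (γ l).re + α.im := by simp
    rw [h]
    have := hlow l
    nlinarith [abs_nonneg l]
  have hre2 : ∀ l : ℝ, (-γ l * ((y:ℂ) + (y₀:ℂ))).re = -(γ l).re * (y + y₀) := by
    intro l
    have h : ((y:ℂ) + (y₀:ℂ)) = ((y + y₀ : ℝ) : ℂ) := by push_cast; ring
    rw [h]; simp
  have hre3 : ∀ l : ℝ, (-(γ l - Complex.I * α) * (C:ℂ)).re = -((γ l).re + α.im) * C := by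
    intro l
    rw [show (-(γ l - Complex.I * α) * (C:ℂ)).re = (-(γ l - Complex.I * α)).re * C by simp]
    congr 1
    simp
    ring
  -- claim 3
  have claim3 : Integrable (fun l : ℝ =>
      Complex.exp (-γ l * ((y:ℂ) + (y₀:ℂ))) *
        (Complex.exp (-(γ l - Complex.I * α) * (C:ℂ)) / (γ l - Complex.I * α)) *
        Complex.exp (Complex.I * l * ((x:ℂ) - (x₀:ℂ))) / γ l) := by
    refine Integrable.mono' ((ffi_integrable_exp_neg_mul_abs ham).const_mul (1 / (a * m)))
      ?_ ?_
    · apply Continuous.aestronglyMeasurable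
      apply Continuous.div _ hγcont hγ0
      refine Continuous.mul (Continuous.mul ?_ ?_) ?_
      · exact (hγcont.neg.mul continuous_const).cexp
      · exact Continuous.div ((hγcont.sub continuous_const).neg.mul continuous_const).cexp
          (hγcont.sub continuous_const) hcc0
      · exact ((continuous_const.mul Complex.continuous_ofReal).mul continuous_const).cexp
    · filter_upwards with l
      rw [norm_div, norm_mul, norm_mul, norm_div]
      simp only [Complex.norm_exp, hre2, hre3]
      have b1 : Real.exp (-(γ l).re * (y + y₀)) ≤ 1 := by
        rw [Real.exp_le_one_iff]; nlinarith [hγre l]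
      have b2 : Real.exp ((Complex.I * (l:ℂ) * ((x:ℂ) - (x₀:ℂ))).re) = 1 := by
        rw [show (Complex.I * (l:ℂ) * ((x:ℂ) - (x₀:ℂ))).re = 0 by simp, Real.exp_zero]
      have b3 : Real.exp (-((γ l).re + α.im) * C) ≤ Real.exp (-(a * C) * |l|) := by
        rw [Real.exp_le_exp]
        have := hlow l
        nlinarith [abs_nonneg l, hC]
      rw [b2, mul_one]
      have hAcc := hccabs l
      have hAγ := hγabs l
      have h4 : Real.exp (-((γ l).re + α.im) * C) / ‖γ l - Complex.I * α‖
          ≤ Real.exp (-(a * C) * |l|) / a := by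
        apply div_le_div₀ (Real.exp_pos _).le b3 ha_pos hAcc
      have h5 : Real.exp (-(γ l).re * (y + y₀)) *
          (Real.exp (-((γ l).re + α.im) * C) / ‖γ l - Complex.I * α‖)
          ≤ Real.exp (-(a * C) * |l|) / a := by
        calc Real.exp (-(γ l).re * (y + y₀)) *
            (Real.exp (-((γ l).re + α.im) * C) / ‖γ l - Complex.I * α‖)
            ≤ 1 * (Real.exp (-(a * C) * |l|) / a) := by
              apply mul_le_mul b1 h4 (by positivity) (by norm_num)
          _ = Real.exp (-(a * C) * |l|) / a := one_mul _
      calc Real.exp (-(γ l).re * (y + y₀)) *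
          (Real.exp (-((γ l).re + α.im) * C) / ‖γ l - Complex.I * α‖) /
          ‖γ l‖
          ≤ (Real.exp (-(a * C) * |l|) / a) / m := by
            exact div_le_div₀ (by positivity) h5 hm_pos hAγ
        _ = 1 / (a * m) * Real.exp (-(a * C) * |l|) := by field_simp
  -- evaluate the inner η-integral
  have hinner : ∀ l : ℝ, (∫ η in Set.Ioi C, F η l)
      = Complex.exp (-γ l * ((y:ℂ) + (y₀:ℂ))) *
        (Complex.exp (-(γ l - Complex.I * α) * (C:ℂ)) / (γ l - Complex.I * α)) *
        Complex.exp (Complex.I * l * ((x:ℂ) - (x₀:ℂ))) / γ l := by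
    intro l
    have hFrw : ∀ η : ℝ, F η l =
        (Complex.exp (-γ l * ((y:ℂ) + (y₀:ℂ))) *
          Complex.exp (Complex.I * l * ((x:ℂ) - (x₀:ℂ))) / γ l) *
          Complex.exp (-((γ l - Complex.I * α) * (η:ℂ))) := by
      intro η
      simp only [hF]
      have e1 : Complex.exp (-γ l * ((y:ℂ) + (y₀:ℂ) + (η:ℂ)))
          = Complex.exp (-γ l * ((y:ℂ) + (y₀:ℂ))) * Complex.exp (-γ l * (η:ℂ)) := by
        rw [← Complex.exp_add]
        exact congrArg Complex.exp (by ring)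
      have e2 : Complex.exp (-γ l * (η:ℂ)) * Complex.exp (Complex.I * α * (η:ℂ))
          = Complex.exp (-((γ l - Complex.I * α) * (η:ℂ))) := by
        rw [← Complex.exp_add]
        exact congrArg Complex.exp (by ring)
      rw [e1, ← e2]; ring
    calc (∫ η in Set.Ioi C, F η l)
        = ∫ η in Set.Ioi C,
            (Complex.exp (-γ l * ((y:ℂ) + (y₀:ℂ))) *
              Complex.exp (Complex.I * l * ((x:ℂ) - (x₀:ℂ))) / γ l) *
              Complex.exp (-((γ l - Complex.I * α) * (η:ℂ))) := by
          exact setIntegral_congr_fun measurableSet_Ioi fun η _ => hFrw η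
      _ = (Complex.exp (-γ l * ((y:ℂ) + (y₀:ℂ))) *
            Complex.exp (Complex.I * l * ((x:ℂ) - (x₀:ℂ))) / γ l) *
            ∫ η in Set.Ioi C, Complex.exp (-((γ l - Complex.I * α) * (η:ℂ))) :=
          integral_const_mul _ _
      _ = (Complex.exp (-γ l * ((y:ℂ) + (y₀:ℂ))) *
            Complex.exp (Complex.I * l * ((x:ℂ) - (x₀:ℂ))) / γ l) *
            (Complex.exp (-((γ l - Complex.I * α) * (C:ℂ))) / (γ l - Complex.I * α)) := by
          rw [(ffi_integral_exp_Ioi (hccre l) C).1]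
      _ = Complex.exp (-γ l * ((y:ℂ) + (y₀:ℂ))) *
            (Complex.exp (-(γ l - Complex.I * α) * (C:ℂ)) / (γ l - Complex.I * α)) *
            Complex.exp (Complex.I * l * ((x:ℂ) - (x₀:ℂ))) / γ l := by
          rw [show (-(γ l - Complex.I * α) * (C:ℂ)) = -((γ l - Complex.I * α) * (C:ℂ)) from
            neg_mul _ _]
          ring
  refine ⟨claim1, claim2, claim3, ?_⟩
  calc ∫ η in Set.Ioi C,
        ((1 / (4 * (Real.pi : ℂ))) * ∫ l : ℝ,
            Complex.exp (-γ l * ((y:ℂ) + (y₀:ℂ) + (η:ℂ))) *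
              Complex.exp (Complex.I * l * ((x:ℂ) - (x₀:ℂ))) / γ l) *
          Complex.exp (Complex.I * α * (η:ℂ))
      = ∫ η in Set.Ioi C, (1 / (4 * (Real.pi : ℂ))) * ∫ l : ℝ, F η l :=
        setIntegral_congr_fun measurableSet_Ioi fun η _ => hpt η
    _ = (1 / (4 * (Real.pi : ℂ))) * ∫ η in Set.Ioi C, ∫ l : ℝ, F η l :=
        integral_const_mul _ _
    _ = (1 / (4 * (Real.pi : ℂ))) * ∫ l : ℝ, ∫ η in Set.Ioi C, F η l := by
        rw [integral_integral_swap hFint]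
    _ = (1 / (4 * (Real.pi : ℂ))) * ∫ l : ℝ,
          Complex.exp (-γ l * ((y:ℂ) + (y₀:ℂ))) *
            (Complex.exp (-(γ l - Complex.I * α) * (C:ℂ)) / (γ l - Complex.I * α)) *
            Complex.exp (Complex.I * l * ((x:ℂ) - (x₀:ℂ))) / γ l := by
        congr 1
        exact integral_congr_ae (Filter.Eventually.of_forall hinner)
end

section
/- Let k ∈ ℂ with Re k > 0 and Im k > 0, let α ∈ ℂ with Im α ≥ 0, and fix x, x₀ ∈ ℝ and y, y₀ ≥ 0 with y + y₀ > 0. Then (1/4π)·∫_ℝ e^{−γ(λ)(y+y₀)}·e^{iλ(x−x₀)}/γ(λ) dλ + 2iα·∫_0^∞ [ (1/4π)·∫_ℝ e^{−γ(λ)(y+y₀+η)}·e^{iλ(x−x₀)}/γ(λ) dλ ]·e^{iαη} dη = (1/4π)·∫_ℝ e^{−γ(λ)(y+y₀)}·((γ(λ)+iα)/(γ(λ)−iα))·e^{iλ(x−x₀)}/γ(λ) dλ, with all integrals converging absolutely. -/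
open MeasureTheory Set Filter

private lemma myIntegrableExpNegAbs {c : ℝ} (hc : 0 < c) :
    Integrable (fun x : ℝ => Real.exp (-c * |x|)) := by
  have hf : IntegrableOn (fun x : ℝ => Real.exp (-c * |x|)) (Ioi 0) := by
    refine (exp_neg_integrableOn_Ioi 0 hc).congr_fun (fun x hx => ?_) measurableSet_Ioi
    rw [abs_of_pos hx]
  have int_Iic : IntegrableOn (fun x : ℝ => Real.exp (-c * |x|)) (Iic 0) := by
    rw [← Measure.map_neg_eq_self (volume : Measure ℝ)]
    have m : MeasurableEmbedding fun x : ℝ => -x := (Homeomorph.neg ℝ).measurableEmbedding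
    rw [m.integrableOn_map_iff]
    simp_rw [Function.comp_def, abs_neg, neg_preimage, neg_Iic, neg_zero]
    exact (integrableOn_Ici_iff_integrableOn_Ioi).mpr hf
  rw [← integrableOn_univ, ← Iic_union_Ioi (a := (0:ℝ))]
  exact int_Iic.union hf

private lemma myCexpIntegrable {c : ℂ} (hc : 0 < c.re) :
    IntegrableOn (fun x : ℝ => Complex.exp (-c * x)) (Ioi 0) := by
  refine Integrable.mono' (exp_neg_integrableOn_Ioi 0 hc)
    ((Complex.continuous_exp.comp (continuous_const.mul Complex.continuous_ofReal)).aestronglyMeasurable)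
    (Filter.Eventually.of_forall fun x => ?_)
  rw [Complex.norm_exp]
  simp [Complex.mul_re]

private lemma myCexpIntegral {c : ℂ} (hc : 0 < c.re) :
    ∫ x in Ioi (0:ℝ), Complex.exp (-c * x) = 1 / c := by
  have hcne : c ≠ 0 := fun h => by simp [h] at hc
  have hderiv : ∀ x ∈ Ici (0:ℝ), HasDerivAt (fun x : ℝ => Complex.exp (-c * x) / (-c))
      (Complex.exp (-c * x)) x := by
    intro x _
    have h1 : HasDerivAt (fun x : ℝ => -c * (x:ℂ)) (-c) x := by
      simpa using ((hasDerivAt_id x).ofReal_comp).const_mul (-c)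
    have h2 := (h1.cexp).div_const (-c)
    have : Complex.exp (-c * x) * -c / -c = Complex.exp (-c * x) := by
      field_simp
    rwa [this] at h2
  have htend : Tendsto (fun x : ℝ => Complex.exp (-c * x) / (-c)) atTop (nhds 0) := by
    rw [tendsto_zero_iff_norm_tendsto_zero]
    have h1 : Tendsto (fun x : ℝ => Real.exp (-(c.re * x))) atTop (nhds 0) :=
      Real.tendsto_exp_atBot.comp (tendsto_neg_atBot_iff.mpr
        (Tendsto.const_mul_atTop hc tendsto_id))
    have h2 : Tendsto (fun x : ℝ => Real.exp (-(c.re * x)) * (1 / ‖(-c)‖)) atTop (nhds 0) := by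
      simpa using h1.mul_const (1 / ‖(-c)‖)
    refine Tendsto.congr (fun x => ?_) h2
    simp only [norm_div, Complex.norm_exp, Complex.mul_re, Complex.neg_re,
      Complex.ofReal_re, Complex.neg_im, Complex.ofReal_im]
    ring_nf
  have := integral_Ioi_of_hasDerivAt_of_tendsto' hderiv (myCexpIntegrable hc) htend
  rw [this]
  simp [Complex.exp_zero]

set_option maxHeartbeats 1000000 in
/-- Equivalence of the real-image representation of the scattered field
(reflected image plus image ray with density `2iα·e^{iαη}`) and the spectral
representation with impedance reflection coefficient `(γ+iα)/(γ−iα)`: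
`(1/4π)·∫_ℝ e^{−γ(λ)(y+y₀)}·e^{iλ(x−x₀)}/γ(λ) dλ
 + 2iα·∫_0^∞ [(1/4π)·∫_ℝ e^{−γ(λ)(y+y₀+η)}·e^{iλ(x−x₀)}/γ(λ) dλ]·e^{iαη} dη
 = (1/4π)·∫_ℝ e^{−γ(λ)(y+y₀)}·((γ(λ)+iα)/(γ(λ)−iα))·e^{iλ(x−x₀)}/γ(λ) dλ`,
with all integrals converging absolutely. -/
theorem image_representation_eq_spectral (k α : ℂ)
    (hk_re : 0 < k.re) (hk_im : 0 < k.im) (hα : 0 ≤ α.im)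
    (x x₀ y y₀ : ℝ) (hy : 0 ≤ y) (hy₀ : 0 ≤ y₀) (hyy₀ : 0 < y + y₀)
    (γ : ℝ → ℂ) (hγ : ∀ l : ℝ, γ l = ((l : ℂ) ^ 2 - k ^ 2) ^ ((1 : ℂ) / 2)) :
    Integrable (fun l : ℝ =>
      Complex.exp (-γ l * (y + y₀)) *
        Complex.exp (Complex.I * l * (x - x₀)) / γ l) ∧
    (∀ η : ℝ, 0 ≤ η → Integrable (fun l : ℝ =>
      Complex.exp (-γ l * (y + y₀ + η)) *
        Complex.exp (Complex.I * l * (x - x₀)) / γ l)) ∧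
    IntegrableOn (fun η : ℝ =>
      ((1 / (4 * (Real.pi : ℂ))) * ∫ l : ℝ,
          Complex.exp (-γ l * (y + y₀ + η)) *
            Complex.exp (Complex.I * l * (x - x₀)) / γ l) *
        Complex.exp (Complex.I * α * η)) (Set.Ioi 0) ∧
    Integrable (fun l : ℝ =>
      Complex.exp (-γ l * (y + y₀)) *
        ((γ l + Complex.I * α) / (γ l - Complex.I * α)) *
        Complex.exp (Complex.I * l * (x - x₀)) / γ l) ∧
    (1 / (4 * (Real.pi : ℂ))) * (∫ l : ℝ,
        Complex.exp (-γ l * (y + y₀)) *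
          Complex.exp (Complex.I * l * (x - x₀)) / γ l) +
      2 * Complex.I * α * ∫ η in Set.Ioi (0 : ℝ),
        ((1 / (4 * (Real.pi : ℂ))) * ∫ l : ℝ,
            Complex.exp (-γ l * (y + y₀ + η)) *
              Complex.exp (Complex.I * l * (x - x₀)) / γ l) *
          Complex.exp (Complex.I * α * η) =
      (1 / (4 * (Real.pi : ℂ))) * ∫ l : ℝ,
          Complex.exp (-γ l * (y + y₀)) *
            ((γ l + Complex.I * α) / (γ l - Complex.I * α)) *
            Complex.exp (Complex.I * l * (x - x₀)) / γ l := by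
  have hspos : 0 < y + y₀ := hyy₀
  set b : ℝ := 2 * k.re * k.im with hb
  have hbpos : 0 < b := by positivity
  -- basic facts about z l = l² - k²
  have hz_im : ∀ l : ℝ, ((l:ℂ)^2 - k^2).im = -b := by
    intro l
    simp [pow_two, Complex.mul_im, hb]
    ring
  have hz_ne : ∀ l : ℝ, ((l:ℂ)^2 - k^2) ≠ 0 := by
    intro l h
    have h2 := hz_im l
    rw [h] at h2
    simp only [Complex.zero_im] at h2
    linarith
  have hγ_exp : ∀ l : ℝ, γ l = Complex.exp (Complex.log ((l:ℂ)^2 - k^2) * (1/2)) := by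
    intro l
    rw [hγ l, Complex.cpow_def_of_ne_zero (hz_ne l)]
  have hγ_ne : ∀ l, γ l ≠ 0 := fun l => by rw [hγ_exp l]; exact Complex.exp_ne_zero _
  have hγ_sq : ∀ l, γ l * γ l = (l:ℂ)^2 - k^2 := by
    intro l
    rw [hγ_exp l, ← Complex.exp_add,
      show Complex.log ((l:ℂ)^2-k^2) * (1/2) + Complex.log ((l:ℂ)^2-k^2) * (1/2)
        = Complex.log ((l:ℂ)^2-k^2) by ring]
    exact Complex.exp_log (hz_ne l)
  have hγcont : Continuous γ := by
    rw [funext hγ]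
    refine continuous_iff_continuousAt.mpr fun l => ?_
    have hzslit : ((l:ℂ)^2 - k^2) ∈ Complex.slitPlane := by
      rw [Complex.mem_slitPlane_iff]
      right; rw [hz_im l]; exact ne_of_lt (by linarith)
    exact ContinuousAt.cpow (by fun_prop) continuousAt_const hzslit
  set r : ℝ → ℝ := fun l => (γ l).re with hrdef
  have hrpos : ∀ l, 0 < r l := by
    intro l
    have harg1 : -Real.pi < Complex.arg ((l:ℂ)^2-k^2) := Complex.neg_pi_lt_arg _
    have harg2 : Complex.arg ((l:ℂ)^2-k^2) < 0 :=
      Complex.arg_neg_iff.mpr (by rw [hz_im l]; linarith)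
    have him : (Complex.log ((l:ℂ)^2-k^2) * (1/2)).im = Complex.arg ((l:ℂ)^2-k^2) / 2 := by
      rw [show ((1:ℂ)/2) = ((1/2 : ℝ) : ℂ) by norm_num, Complex.mul_im]
      simp [Complex.log_im]
      ring
    have : 0 < (γ l).re := by
      rw [hγ_exp l, Complex.exp_re, him]
      apply mul_pos (Real.exp_pos _)
      apply Real.cos_pos_of_mem_Ioo
      constructor <;> [linarith [Real.pi_pos]; linarith [Real.pi_pos]]
    simpa [hrdef] using this
  have hre_sq : ∀ l : ℝ, (r l)^2 - (γ l).im^2 = l^2 - (k^2).re := by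
    intro l
    have h := congrArg Complex.re (hγ_sq l)
    simp only [Complex.mul_re, Complex.sub_re, Complex.ofReal_re] at h
    simp only [hrdef]
    rw [show ((l:ℂ)^2).re = l^2 by simp [pow_two, Complex.mul_re]] at h
    nlinarith [h]
  have him_eq : ∀ l : ℝ, 2 * r l * (γ l).im = -b := by
    intro l
    have h := congrArg Complex.im (hγ_sq l)
    rw [show ((l:ℂ)^2 - k^2).im = -b from hz_im l] at h
    simp only [Complex.mul_im] at h
    simp only [hrdef]
    nlinarith [h]
  set A : ℝ := max (k^2).re 0 with hA
  have hA0 : 0 ≤ A := le_max_right _ _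
  have hAa : (k^2).re ≤ A := le_max_left _ _
  set S : ℝ := Real.sqrt (A^2 + b^2) with hS
  have hS2 : S^2 = A^2 + b^2 := Real.sq_sqrt (by positivity)
  have hS0 : 0 ≤ S := Real.sqrt_nonneg _
  have hSA : A < S := by nlinarith
  set u₀ : ℝ := (S - A)/2 with hu₀
  have hu₀pos : 0 < u₀ := by simp only [hu₀]; linarith
  have hu : ∀ l, u₀ ≤ (r l)^2 := by
    intro l
    have h1 := hre_sq l
    have h2 := him_eq l
    have h3 : (2 * r l * (γ l).im)^2 = b^2 := by rw [h2]; ring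
    have h4 : 4*(r l)^2*((γ l).im)^2 = b^2 := by linear_combination h3
    have hrl := hrpos l
    have hv : (γ l).im^2 = (r l)^2 - l^2 + (k^2).re := by linarith [h1]
    have h5 : 4*(r l)^2*((r l)^2 - l^2 + (k^2).re) = b^2 := by rw [← hv]; exact h4
    have hle : (k^2).re - l^2 ≤ A := by nlinarith [sq_nonneg l]
    have key : 4*(r l)^2*((k^2).re - l^2) ≤ 4*(r l)^2*A :=
      mul_le_mul_of_nonneg_left hle (by positivity)
    have h6 : S^2 ≤ (2*(r l)^2 + A)^2 := by nlinarith [key, h5, hS2]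
    have h7 : S ≤ 2*(r l)^2 + A := by
      have h8 := Real.sqrt_le_sqrt h6
      rw [Real.sqrt_sq hS0, Real.sqrt_sq (by positivity)] at h8
      exact h8
    simp only [hu₀]
    linarith
  set r₀ : ℝ := Real.sqrt u₀ with hr₀def
  have hr₀pos : 0 < r₀ := Real.sqrt_pos.mpr hu₀pos
  have hr₀ : ∀ l, r₀ ≤ r l := by
    intro l
    calc r₀ = Real.sqrt u₀ := rfl
      _ ≤ Real.sqrt ((r l)^2) := Real.sqrt_le_sqrt (hu l)
      _ = r l := Real.sqrt_sq (le_of_lt (hrpos l))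
  set R : ℝ := Real.sqrt (2*A) with hR
  have hR0 : 0 ≤ R := Real.sqrt_nonneg _
  have hrlin : ∀ l : ℝ, |l|/2 - R/2 ≤ r l := by
    intro l
    rcases le_or_gt (|l|) R with h | h
    · linarith [hrpos l]
    · have hR2 : R^2 = 2*A := Real.sq_sqrt (by positivity)
      have hl2 : 2*A < l^2 := by nlinarith [Real.sqrt_nonneg (2*A), sq_abs l]
      have hsq : (|l|/2)^2 ≤ (r l)^2 := by
        have h1 := hre_sq l
        nlinarith [sq_nonneg ((γ l).im), sq_abs l]
      have h9 := Real.sqrt_le_sqrt hsq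
      rw [Real.sqrt_sq (by positivity), Real.sqrt_sq (le_of_lt (hrpos l))] at h9
      linarith
  have hrcont : Continuous r := Complex.continuous_re.comp hγcont
  -- integrability of exp(-t * r l)
  have hInt : ∀ t : ℝ, 0 < t → Integrable (fun l => Real.exp (-t * r l)) := by
    intro t ht
    refine Integrable.mono'
      ((myIntegrableExpNegAbs (show (0:ℝ) < t/2 by linarith)).const_mul (Real.exp (t*R/2)))
      ((Real.continuous_exp.comp (continuous_const.mul hrcont)).aestronglyMeasurable)
      (Eventually.of_forall fun l => ?_)
    rw [Real.norm_eq_abs, abs_of_pos (Real.exp_pos _), ← Real.exp_add]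
    apply Real.exp_le_exp.mpr
    have := hrlin l
    nlinarith
  -- norms
  have habs2 : ∀ l : ℝ, ‖Complex.exp (Complex.I * l * ((x:ℂ) - (x₀:ℂ)))‖ = 1 := by
    intro l
    rw [Complex.norm_exp]
    rw [show (Complex.I * l * ((x:ℂ) - (x₀:ℂ))).re = 0 by
      simp [Complex.mul_re, Complex.mul_im, Complex.I_re, Complex.I_im]]
    exact Real.exp_zero
  have habs1 : ∀ (l t : ℝ), ‖Complex.exp (-γ l * (t:ℂ))‖ = Real.exp (-(r l) * t) := by
    intro l t
    rw [Complex.norm_exp]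
    congr 1
    simp [Complex.mul_re, hrdef]
  have hXnorm : ∀ (t l : ℝ),
      ‖Complex.exp (-γ l * (t:ℂ)) * Complex.exp (Complex.I * l * ((x:ℂ) - (x₀:ℂ))) / γ l‖
        = Real.exp (-(r l) * t) / ‖γ l‖ := by
    intro t l
    rw [norm_div, norm_mul,
      habs1, habs2, mul_one]
  have habsγ : ∀ l, r₀ ≤ ‖γ l‖ := fun l =>
    le_trans (hr₀ l) (le_trans (le_abs_self _) (Complex.abs_re_le_norm _))
  -- integrability of the basic integrand for every height t ≥ y + y₀
  have hGint : ∀ t : ℝ, y + y₀ ≤ t → Integrable (fun l : ℝ =>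
      Complex.exp (-γ l * (t:ℂ)) * Complex.exp (Complex.I * l * ((x:ℂ) - (x₀:ℂ))) / γ l) := by
    intro t ht
    refine Integrable.mono' ((hInt (y+y₀) hspos).const_mul (1/r₀))
      (Continuous.aestronglyMeasurable ?_) (Eventually.of_forall fun l => ?_)
    · exact ((Complex.continuous_exp.comp ((hγcont.neg).mul continuous_const)).mul
        (Complex.continuous_exp.comp (by fun_prop))).div hγcont hγ_ne
    · rw [hXnorm t l]
      have h1 : Real.exp (-(r l)*t) ≤ Real.exp (-(y+y₀) * (r l)) :=
        Real.exp_le_exp.mpr (by nlinarith [hrpos l])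
      have h2 : Real.exp (-(r l)*t) / ‖γ l‖ ≤ Real.exp (-(y+y₀) * (r l)) / r₀ :=
        div_le_div₀ (Real.exp_pos _).le h1 hr₀pos (habsγ l)
      have h3 : Real.exp (-(y+y₀) * (r l)) / r₀ = 1/r₀ * Real.exp (-(y+y₀) * (r l)) := by ring
      linarith [h2, h3.le]
  have item1 : Integrable (fun l : ℝ =>
      Complex.exp (-γ l * ((y:ℂ) + (y₀:ℂ))) *
        Complex.exp (Complex.I * l * ((x:ℂ) - (x₀:ℂ))) / γ l) := by
    simpa only [Complex.ofReal_add] using hGint (y+y₀) le_rfl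
  have item2 : ∀ η : ℝ, 0 ≤ η → Integrable (fun l : ℝ =>
      Complex.exp (-γ l * ((y:ℂ) + (y₀:ℂ) + (η:ℂ))) *
        Complex.exp (Complex.I * l * ((x:ℂ) - (x₀:ℂ))) / γ l) := by
    intro η hη
    simpa only [Complex.ofReal_add] using hGint (y+y₀+η) (by linarith)
  -- facts about γ - I α
  have hre_sub : ∀ l, (γ l - Complex.I*α).re = r l + α.im := by
    intro l
    simp [Complex.sub_re, Complex.mul_re, Complex.I_re, Complex.I_im, hrdef]
  have hre_sub_pos : ∀ l, 0 < (γ l - Complex.I*α).re := by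
    intro l
    rw [hre_sub l]
    linarith [hrpos l]
  have hsub_ne : ∀ l, γ l - Complex.I*α ≠ 0 := by
    intro l h
    have h2 := hre_sub_pos l
    rw [h] at h2
    simp at h2
  -- the product function
  set F : ℝ × ℝ → ℂ := fun p =>
    Complex.exp (-γ p.2 * ((y+y₀+p.1 : ℝ):ℂ)) *
      Complex.exp (Complex.I * p.2 * ((x:ℂ) - (x₀:ℂ))) / γ p.2 *
      Complex.exp (Complex.I * α * (p.1:ℂ)) with hF
  have hFcont : Continuous F := by
    refine Continuous.mul (Continuous.div ?_ (hγcont.comp continuous_snd) fun p => hγ_ne p.2) ?_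
    · refine Continuous.mul ?_ (Complex.continuous_exp.comp (by fun_prop))
      refine Complex.continuous_exp.comp ?_
      exact ((hγcont.comp continuous_snd).neg).mul (by fun_prop)
    · exact Complex.continuous_exp.comp (by fun_prop)
  have hM := Measure.prod_restrict (μ := (volume : Measure ℝ)) (ν := (volume : Measure ℝ))
    (Ioi (0:ℝ)) (univ : Set ℝ)
  rw [Measure.restrict_univ] at hM
  have hae : ∀ᵐ p ∂((volume.restrict (Ioi (0:ℝ))).prod (volume : Measure ℝ)), 0 < p.1 := by
    rw [hM]
    filter_upwards [ae_restrict_mem (measurableSet_Ioi.prod MeasurableSet.univ)] with p hp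
    exact hp.1
  have hFint : Integrable F ((volume.restrict (Ioi (0:ℝ))).prod (volume : Measure ℝ)) := by
    refine Integrable.mono' (g := fun p : ℝ × ℝ =>
        (1/r₀) * (Real.exp (-r₀ * p.1) * Real.exp (-((y+y₀)/2) * r p.2)))
      (((exp_neg_integrableOn_Ioi 0 hr₀pos).mul_prod
        (hInt ((y+y₀)/2) (by linarith))).const_mul (1/r₀))
      hFcont.aestronglyMeasurable ?_
    filter_upwards [hae] with p hp
    have hαnorm : ‖Complex.exp (Complex.I * α * (p.1:ℂ))‖ = Real.exp (-α.im * p.1) := by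
      rw [Complex.norm_exp]
      congr 1
      simp [Complex.mul_re, Complex.mul_im, Complex.I_re, Complex.I_im]
    have hnormF : ‖F p‖ = Real.exp (-(r p.2) * (y+y₀+p.1)) / ‖γ p.2‖
        * Real.exp (-α.im * p.1) := by
      simp only [hF]
      rw [norm_mul, hXnorm (y+y₀+p.1) p.2, hαnorm]
    rw [hnormF]
    have hb1 : Real.exp (-(r p.2) * (y+y₀+p.1)) / ‖γ p.2‖
        ≤ Real.exp (-(r p.2) * (y+y₀+p.1)) / r₀ :=
      div_le_div_of_nonneg_left (Real.exp_pos _).le hr₀pos (habsγ p.2)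
    have hb2 : Real.exp (-α.im * p.1) ≤ 1 :=
      Real.exp_le_one_iff.mpr (by nlinarith [hp.le])
    have hb3 : Real.exp (-(r p.2) * (y+y₀+p.1)) / ‖γ p.2‖
        * Real.exp (-α.im * p.1) ≤ Real.exp (-(r p.2) * (y+y₀+p.1)) / r₀ * 1 := by
      apply mul_le_mul hb1 hb2 (Real.exp_pos _).le
      positivity
    refine le_trans hb3 ?_
    have h1 : Real.exp (-(r p.2)*(y+y₀+p.1)) ≤ Real.exp (-r₀*p.1 + -((y+y₀)/2)*(r p.2)) := by
      apply Real.exp_le_exp.mpr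
      nlinarith [mul_nonneg (sub_nonneg.mpr (hr₀ p.2)) hp.le,
        mul_nonneg (hrpos p.2).le (le_of_lt hspos), hrpos p.2]
    calc Real.exp (-(r p.2)*(y+y₀+p.1)) / r₀ * 1
        = (1/r₀) * Real.exp (-(r p.2)*(y+y₀+p.1)) := by ring
      _ ≤ (1/r₀) * Real.exp (-r₀*p.1 + -((y+y₀)/2)*(r p.2)) := by
          apply mul_le_mul_of_nonneg_left h1 (by positivity)
      _ = (1/r₀) * (Real.exp (-r₀*p.1) * Real.exp (-((y+y₀)/2)*(r p.2))) := by
          rw [Real.exp_add]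
  -- inner integral over η
  have hinner : ∀ l : ℝ, (∫ η in Ioi (0:ℝ), F (η, l))
      = Complex.exp (-γ l * ((y+y₀:ℝ):ℂ)) *
          Complex.exp (Complex.I * l * ((x:ℂ) - (x₀:ℂ))) / γ l * (1/(γ l - Complex.I*α)) := by
    intro l
    have hptw : ∀ η : ℝ, F (η, l) = (Complex.exp (-γ l * ((y+y₀:ℝ):ℂ)) *
        Complex.exp (Complex.I * l * ((x:ℂ) - (x₀:ℂ))) / γ l) *
        Complex.exp (-(γ l - Complex.I*α) * (η:ℂ)) := by
      intro η
      simp only [hF]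
      rw [show ((y+y₀+η:ℝ):ℂ) = ((y+y₀:ℝ):ℂ) + (η:ℂ) by push_cast; ring]
      rw [show -γ l * (((y+y₀:ℝ):ℂ) + (η:ℂ)) = -γ l * ((y+y₀:ℝ):ℂ) + -γ l * (η:ℂ) by ring,
        Complex.exp_add]
      rw [show -(γ l - Complex.I*α) * (η:ℂ) = -γ l * (η:ℂ) + Complex.I*α*(η:ℂ) by ring,
        Complex.exp_add]
      ring
    simp_rw [hptw]
    rw [MeasureTheory.integral_const_mul, myCexpIntegral (hre_sub_pos l)]
  have hIntB : Integrable (fun l : ℝ => Complex.exp (-γ l * ((y+y₀:ℝ):ℂ)) *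
      Complex.exp (Complex.I * l * ((x:ℂ) - (x₀:ℂ))) / γ l * (1/(γ l - Complex.I*α))) :=
    (hFint.integral_prod_right).congr (Eventually.of_forall hinner)
  have hIntB' : Integrable (fun l : ℝ => Complex.exp (-γ l * ((y:ℂ) + (y₀:ℂ))) *
      Complex.exp (Complex.I * l * ((x:ℂ) - (x₀:ℂ))) / γ l * (1/(γ l - Complex.I*α))) := by
    simpa only [Complex.ofReal_add] using hIntB
  -- pointwise identity for the reflection coefficient
  have hpt2 : ∀ l : ℝ, Complex.exp (-γ l * ((y:ℂ) + (y₀:ℂ))) *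
      ((γ l + Complex.I*α)/(γ l - Complex.I*α)) *
      Complex.exp (Complex.I * l * ((x:ℂ) - (x₀:ℂ))) / γ l
      = Complex.exp (-γ l * ((y:ℂ) + (y₀:ℂ))) *
          Complex.exp (Complex.I * l * ((x:ℂ) - (x₀:ℂ))) / γ l
        + 2*Complex.I*α * (Complex.exp (-γ l * ((y:ℂ) + (y₀:ℂ))) *
          Complex.exp (Complex.I * l * ((x:ℂ) - (x₀:ℂ))) / γ l * (1/(γ l - Complex.I*α))) := by
    intro l
    have h1 := hγ_ne l
    have h2 := hsub_ne l
    field_simp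
    ring
  have item4 : Integrable (fun l : ℝ => Complex.exp (-γ l * ((y:ℂ) + (y₀:ℂ))) *
      ((γ l + Complex.I*α)/(γ l - Complex.I*α)) *
      Complex.exp (Complex.I * l * ((x:ℂ) - (x₀:ℂ))) / γ l) :=
    (item1.add (hIntB'.const_mul (2*Complex.I*α))).congr
      (Eventually.of_forall fun l => (hpt2 l).symm)
  -- slice integral over l
  have hslice : ∀ η : ℝ, (∫ l : ℝ, F (η, l))
      = (∫ l : ℝ, Complex.exp (-γ l * ((y+y₀+η:ℝ):ℂ)) *
          Complex.exp (Complex.I * l * ((x:ℂ) - (x₀:ℂ))) / γ l) *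
        Complex.exp (Complex.I * α * (η:ℂ)) := by
    intro η
    simp only [hF]
    exact MeasureTheory.integral_mul_const _ _
  have item3 : IntegrableOn (fun η : ℝ =>
      ((1 / (4 * (Real.pi : ℂ))) * ∫ l : ℝ,
          Complex.exp (-γ l * ((y:ℂ) + (y₀:ℂ) + (η:ℂ))) *
            Complex.exp (Complex.I * l * ((x:ℂ) - (x₀:ℂ))) / γ l) *
        Complex.exp (Complex.I * α * η)) (Ioi 0) := by
    have h := ((hFint.integral_prod_left).congr
      (Eventually.of_forall hslice)).const_mul (1 / (4 * (Real.pi : ℂ)))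
    simp only [Complex.ofReal_add] at h
    simpa only [IntegrableOn, ← mul_assoc] using h
  refine ⟨item1, item2, item3, item4, ?_⟩
  -- the main identity
  have hswap := MeasureTheory.integral_integral_swap
    (f := fun η l => F (η, l)) (μ := volume.restrict (Ioi (0:ℝ))) (ν := volume) hFint
  have hinner' : ∀ l : ℝ, (∫ η in Ioi (0:ℝ), F (η, l))
      = Complex.exp (-γ l * ((y:ℂ) + (y₀:ℂ))) *
          Complex.exp (Complex.I * l * ((x:ℂ) - (x₀:ℂ))) / γ l * (1/(γ l - Complex.I*α)) := by
    intro l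
    simpa only [Complex.ofReal_add] using hinner l
  have hgoal2 : (∫ η in Ioi (0:ℝ),
      ((1 / (4 * (Real.pi : ℂ))) * ∫ l : ℝ,
          Complex.exp (-γ l * ((y:ℂ) + (y₀:ℂ) + (η:ℂ))) *
            Complex.exp (Complex.I * l * ((x:ℂ) - (x₀:ℂ))) / γ l) *
        Complex.exp (Complex.I * α * η))
      = (1 / (4 * (Real.pi : ℂ))) * ∫ l : ℝ,
          Complex.exp (-γ l * ((y:ℂ) + (y₀:ℂ))) *
            Complex.exp (Complex.I * l * ((x:ℂ) - (x₀:ℂ))) / γ l * (1/(γ l - Complex.I*α)) := by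
    have e1 : ∀ η : ℝ, ((1 / (4 * (Real.pi : ℂ))) * ∫ l : ℝ,
          Complex.exp (-γ l * ((y:ℂ) + (y₀:ℂ) + (η:ℂ))) *
            Complex.exp (Complex.I * l * ((x:ℂ) - (x₀:ℂ))) / γ l) *
        Complex.exp (Complex.I * α * (η:ℂ))
        = (1 / (4 * (Real.pi : ℂ))) * ∫ l : ℝ, F (η, l) := by
      intro η
      rw [hslice η]
      simp only [Complex.ofReal_add]
      ring
    rw [MeasureTheory.integral_congr_ae (Eventually.of_forall e1),
      MeasureTheory.integral_const_mul, hswap,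
      MeasureTheory.integral_congr_ae (Eventually.of_forall hinner')]
  rw [hgoal2]
  have hRHS : (∫ l : ℝ, Complex.exp (-γ l * ((y:ℂ) + (y₀:ℂ))) *
      ((γ l + Complex.I*α)/(γ l - Complex.I*α)) *
      Complex.exp (Complex.I * l * ((x:ℂ) - (x₀:ℂ))) / γ l)
      = (∫ l : ℝ, Complex.exp (-γ l * ((y:ℂ) + (y₀:ℂ))) *
          Complex.exp (Complex.I * l * ((x:ℂ) - (x₀:ℂ))) / γ l)
        + 2*Complex.I*α * ∫ l : ℝ, Complex.exp (-γ l * ((y:ℂ) + (y₀:ℂ))) *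
          Complex.exp (Complex.I * l * ((x:ℂ) - (x₀:ℂ))) / γ l * (1/(γ l - Complex.I*α)) := by
    rw [MeasureTheory.integral_congr_ae (Eventually.of_forall hpt2),
      MeasureTheory.integral_add item1 (hIntB'.const_mul (2*Complex.I*α)),
      MeasureTheory.integral_const_mul]
  rw [hRHS]
  ring
end
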